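/- arXiv:2402.16145 — 8 statements merged into one kernel-verified Lean document; each statement's English description precedes it below -/
import Mathlib

section
/- For every fair-division instance with n agents and every allocation A, there exists a balanced allocation B such that u_i(B_i) ≥ (1/n)·u_i(A_i) for every agent i. Consequently, MEW ≤ n·EW(B) for some balanced allocation B, and the egalitarian price of fairness of balancedness over instances with n agents is at most n. -/
open Finset

/-- The bundle of goods assigned to agent `i` by allocation `f`
(an allocation maps each good to the agent receiving it). -/
def bundle {n m : ℕ} (f : Fin m → Fin n) (i : Fin n) : Finset (Fin m) :=
  Finset.univ.filter (fun g => f g = i)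

/-- The (additive) utility of agent `i` for her own bundle under allocation `f`. -/
def util {n m : ℕ} (u : Fin n → Fin m → ℝ) (f : Fin m → Fin n) (i : Fin n) : ℝ :=
  ∑ g ∈ bundle f i, u i g

/-- Egalitarian welfare: the minimum utility over all agents. -/
noncomputable def egalWelfare {n m : ℕ} (u : Fin n → Fin m → ℝ) (f : Fin m → Fin n) : ℝ :=
  ⨅ i : Fin n, util u f i

/-- Maximum egalitarian welfare of the instance, over all allocations. -/
noncomputable def maxEgalWelfare {n m : ℕ} (u : Fin n → Fin m → ℝ) : ℝ :=
  ⨆ f : Fin m → Fin n, egalWelfare u f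

/-- An allocation is balanced if any two bundle sizes differ by at most one. -/
def BalancedAlloc {n m : ℕ} (f : Fin m → Fin n) : Prop :=
  ∀ i j : Fin n, ((bundle f i).card : ℤ) - ((bundle f j).card : ℤ) ∈ ({-1, 0, 1} : Set ℤ)


/-- Selection lemma: from any finite set one can pick a subset of about a 1/n
fraction of the elements carrying at least a 1/n fraction of the weight. -/
lemma select_aux {m : ℕ} (n : ℕ) (hn : 0 < n) (w : Fin m → ℝ) (hw : ∀ g, 0 ≤ w g) :
    ∀ N (S : Finset (Fin m)), S.card ≤ N →
      ∃ T ⊆ S, n * T.card < S.card + n ∧ ∑ g ∈ S, w g ≤ (n : ℝ) * ∑ g ∈ T, w g := by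
  intro N
  induction N with
  | zero =>
    intro S hS
    refine ⟨∅, empty_subset _, ?_, ?_⟩
    · simp only [card_empty]; omega
    · have : S = ∅ := card_eq_zero.mp (Nat.le_zero.mp hS)
      simp [this]
  | succ N ih =>
    intro S hS
    rcases S.eq_empty_or_nonempty with rfl | hne
    · exact ⟨∅, empty_subset _, by simp only [card_empty]; omega, by simp⟩
    obtain ⟨g, hgS, hgmax⟩ := S.exists_max_image w hne
    by_cases hbig : n < S.card
    · -- remove g and n-1 others, recurse
      have hcard : n - 1 ≤ (S.erase g).card := by
        rw [card_erase_of_mem hgS]; omega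
      obtain ⟨S₁, hS₁sub, hS₁card⟩ := Finset.exists_subset_card_eq hcard
      set Rst := (S.erase g) \ S₁ with hRst
      have hRcard : Rst.card = S.card - n := by
        rw [hRst, card_sdiff_of_subset hS₁sub, card_erase_of_mem hgS, hS₁card]; omega
      have hRsub : Rst ⊆ S := (sdiff_subset).trans (erase_subset _ _)
      obtain ⟨T', hT'sub, hT'card, hT'val⟩ := ih Rst (by omega)
      have hgT' : g ∉ T' := fun h => (Finset.mem_sdiff.mp (hT'sub h)).1
        |> fun h2 => (Finset.mem_erase.mp h2).1 rfl
      refine ⟨insert g T', ?_, ?_, ?_⟩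
      · exact insert_subset hgS (hT'sub.trans hRsub)
      · rw [card_insert_of_notMem hgT', Nat.mul_succ]
        omega
      · -- split S = ({g} ∪ S₁) ∪ Rst
        have hdecomp : S = insert g S₁ ∪ Rst := by
          ext x
          simp only [mem_union, mem_insert, hRst, mem_sdiff, mem_erase]
          constructor
          · intro hx
            by_cases hxg : x = g
            · exact Or.inl (Or.inl hxg)
            · by_cases hx1 : x ∈ S₁
              · exact Or.inl (Or.inr hx1)
              · exact Or.inr ⟨⟨hxg, hx⟩, hx1⟩
          · rintro ((rfl | hx1) | hx2)
            · exact hgS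
            · exact (erase_subset _ _) (hS₁sub hx1)
            · exact hRsub (by rw [hRst]; simp [hRst] at hx2 ⊢; tauto)
        have hdisj : Disjoint (insert g S₁) Rst := by
          rw [Finset.disjoint_left]
          intro x hx hx2
          rw [hRst, mem_sdiff, mem_erase] at hx2
          rcases mem_insert.mp hx with rfl | hx1
          · exact hx2.1.1 rfl
          · exact hx2.2 hx1
        have hgS₁ : g ∉ S₁ := fun h => (mem_erase.mp (hS₁sub h)).1 rfl
        have h1 : ∑ x ∈ insert g S₁, w x ≤ (n : ℝ) * w g := by
          rw [sum_insert hgS₁]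
          have : ∑ x ∈ S₁, w x ≤ (n - 1 : ℕ) * w g := by
            calc ∑ x ∈ S₁, w x ≤ ∑ _x ∈ S₁, w g :=
                  sum_le_sum (fun x hx => hgmax x ((erase_subset _ _) (hS₁sub hx)))
              _ = (n - 1 : ℕ) * w g := by rw [sum_const, hS₁card]; push_cast; ring
          have hcast : ((n - 1 : ℕ) : ℝ) = (n : ℝ) - 1 := by
            have : (1:ℕ) ≤ n := hn
            push_cast [this]; ring
          rw [hcast] at this
          nlinarith [hw g]
        calc ∑ x ∈ S, w x = ∑ x ∈ insert g S₁, w x + ∑ x ∈ Rst, w x := by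
              rw [hdecomp, sum_union hdisj]
          _ ≤ (n : ℝ) * w g + (n : ℝ) * ∑ x ∈ T', w x := by linarith
          _ = (n : ℝ) * ∑ x ∈ insert g T', w x := by rw [sum_insert hgT']; ring
    · -- S.card ≤ n : take just {g}
      refine ⟨{g}, singleton_subset_iff.mpr hgS, ?_, ?_⟩
      · have : 1 ≤ S.card := card_pos.mpr hne
        simp only [card_singleton]; omega
      · calc ∑ x ∈ S, w x ≤ ∑ _x ∈ S, w g := sum_le_sum (fun x hx => hgmax x hx)
          _ = (S.card : ℝ) * w g := by rw [sum_const]; push_cast; ring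
          _ ≤ (n : ℝ) * w g := by
              have : (S.card : ℝ) ≤ (n : ℝ) := by exact_mod_cast not_lt.mp hbig
              nlinarith [hw g]
          _ = (n : ℝ) * ∑ x ∈ {g}, w x := by simp



/-- A finite set can be partitioned into parts of any prescribed sizes. -/
lemma exists_partition {α : Type*} [DecidableEq α] :
    ∀ (n : ℕ) (L : Finset α) (d : Fin n → ℕ), ∑ i, d i = L.card →
      ∃ D : Fin n → Finset α, (∀ i, D i ⊆ L) ∧ (∀ i, (D i).card = d i) ∧
        (∀ g ∈ L, ∃ i, g ∈ D i) ∧ ∀ i j, i ≠ j → Disjoint (D i) (D j) := by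
  intro n
  induction n with
  | zero =>
    intro L d h
    have : L = ∅ := card_eq_zero.mp (by simpa using h.symm)
    subst this
    exact ⟨fun i => ∅, fun i => empty_subset _, fun i => i.elim0,
      by simp, fun i j _ => disjoint_empty_left _⟩
  | succ n ih =>
    intro L d h
    rw [Fin.sum_univ_castSucc] at h
    have hle : d (Fin.last n) ≤ L.card := by omega
    obtain ⟨Dl, hDlsub, hDlcard⟩ := Finset.exists_subset_card_eq hle
    have hrest : ∑ i : Fin n, d i.castSucc = (L \ Dl).card := by
      rw [card_sdiff_of_subset hDlsub, hDlcard]; omega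
    obtain ⟨D', hD'sub, hD'card, hD'cov, hD'disj⟩ := ih (L \ Dl) (fun i => d i.castSucc) hrest
    refine ⟨fun i => Fin.lastCases Dl D' i, ?_, ?_, ?_, ?_⟩
    · intro i
      refine Fin.lastCases ?_ ?_ i
      · simpa using hDlsub
      · intro j; simpa using (hD'sub j).trans sdiff_subset
    · intro i
      refine Fin.lastCases ?_ ?_ i
      · simpa using hDlcard
      · intro j; simpa using hD'card j
    · intro g hg
      by_cases hgl : g ∈ Dl
      · exact ⟨Fin.last n, by simpa using hgl⟩
      · obtain ⟨j, hj⟩ := hD'cov g (mem_sdiff.mpr ⟨hg, hgl⟩)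
        exact ⟨j.castSucc, by simpa using hj⟩
    · intro i j hij
      have key : ∀ k : Fin n, Disjoint Dl (D' k) := fun k =>
        Finset.disjoint_left.mpr fun x hx hx2 => (mem_sdiff.mp (hD'sub k hx2)).2 hx
      induction i using Fin.lastCases with
      | last =>
        induction j using Fin.lastCases with
        | last => exact absurd rfl hij
        | cast k => simpa using key k
      | cast k =>
        induction j using Fin.lastCases with
        | last => simpa using (key k).symm
        | cast l =>
          have hkl : k ≠ l := fun h => hij (by rw [h])
          simpa using hD'disj k l hkl


/-- Main lemma: a balanced allocation preserving a 1/n fraction of each utility. -/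
lemma exists_balanced {n m : ℕ} (hn : 0 < n) (u : Fin n → Fin m → ℝ)
    (hpos : ∀ i g, 0 ≤ u i g) (A : Fin m → Fin n) :
    ∃ B : Fin m → Fin n, BalancedAlloc B ∧
      ∀ i, (1 / (n : ℝ)) * util u A i ≤ util u B i := by
  set q := m / n with hq
  set r := m % n with hrdef
  have hm : n * q + r = m := Nat.div_add_mod m n
  have hr : r < n := Nat.mod_lt m hn
  -- bundles of A
  have hAdisj : ∀ i j : Fin n, i ≠ j → Disjoint (bundle A i) (bundle A j) := by
    intro i j hij
    rw [Finset.disjoint_left]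
    intro g hgi hgj
    simp only [bundle, mem_filter] at hgi hgj
    exact hij (hgi.2 ▸ hgj.2)
  have hAcard : ∑ i, (bundle A i).card = m := by
    have h := Finset.card_eq_sum_card_fiberwise
      (f := A) (s := (univ : Finset (Fin m))) (t := (univ : Finset (Fin n)))
      (fun x _ => mem_univ _)
    simp only [card_univ, Fintype.card_fin] at h
    exact h.symm
  have hAle : ∀ i, (bundle A i).card ≤ m := fun i => by
    calc (bundle A i).card ≤ (univ : Finset (Fin m)).card := card_le_univ _
      _ = m := by simp
  -- select kept subsets
  have hsel := fun i => select_aux n hn (u i) (hpos i) m (bundle A i) (hAle i)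
  choose T hTsub hTcard hTval using hsel
  set c := fun i => (T i).card with hc
  have hTdisj : ∀ i j : Fin n, i ≠ j → Disjoint (T i) (T j) := fun i j hij =>
    (hAdisj i j hij).mono (hTsub i) (hTsub j)
  have hcq : ∀ i, c i ≤ q + 1 := by
    intro i
    have h1 : n * c i < n * (q + 2) := by
      have h2 : n * c i < (bundle A i).card + n := hTcard i
      have h3 := hAle i
      have h4 : n * (q + 2) = n * q + n + n := by ring
      omega
    have := Nat.lt_of_mul_lt_mul_left h1
    omega
  -- agents needing a large bundle
  set K := univ.filter (fun i => q + 1 ≤ c i) with hK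
  have hKA : ∀ i ∈ K, n * q + 1 ≤ (bundle A i).card := by
    intro i hi
    rw [hK, mem_filter] at hi
    have h1 : n * (q + 1) ≤ n * c i := Nat.mul_le_mul_left n hi.2
    have h2 : n * c i < (bundle A i).card + n := hTcard i
    have h3 : n * (q + 1) = n * q + n := by ring
    omega
  have hKcard : K.card ≤ r := by
    have h1 : K.card * (n * q + 1) ≤ ∑ i ∈ K, (bundle A i).card := by
      calc K.card * (n * q + 1) = ∑ _i ∈ K, (n * q + 1) := by
            rw [sum_const, smul_eq_mul]
        _ ≤ ∑ i ∈ K, (bundle A i).card := sum_le_sum hKA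
    have h2 : ∑ i ∈ K, (bundle A i).card ≤ m := by
      have h2' : ∑ i ∈ K, (bundle A i).card ≤ ∑ i : Fin n, (bundle A i).card :=
        sum_le_sum_of_subset (subset_univ K)
      omega
    rcases Nat.eq_zero_or_pos (n * q) with hz | hp
    · rw [hz] at h1; omega
    · by_contra hcon
      push_neg at hcon
      have hk1 : 1 ≤ K.card := by omega
      have h3 : n * q ≤ K.card * (n * q) := Nat.le_mul_of_pos_left _ hk1
      have h4 : K.card * (n * q + 1) = K.card * (n * q) + K.card := by ring
      omega
  -- choose target sizes
  obtain ⟨R, hKR, hRcard⟩ := Finset.exists_superset_card_eq (n := r) hKcard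
    (by rw [Fintype.card_fin]; omega)
  set t := fun i => if i ∈ R then q + 1 else q with ht
  have htsum : ∑ i, t i = m := by
    have h1 : ∀ i ∈ (univ : Finset (Fin n)), t i = q + (if i ∈ R then 1 else 0) := by
      intro i _; by_cases h : i ∈ R <;> simp [ht, h]
    rw [sum_congr rfl h1, sum_add_distrib, sum_const]
    have h2 : ∑ i : Fin n, (if i ∈ R then 1 else 0) = R.card := by
      rw [sum_ite_mem, univ_inter, sum_const, smul_eq_mul, mul_one]
    rw [h2, hRcard, smul_eq_mul]
    simp only [card_univ, Fintype.card_fin]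
    omega
  have hct : ∀ i, c i ≤ t i := by
    intro i
    by_cases h : q + 1 ≤ c i
    · have hiR : i ∈ R := hKR (by rw [hK, mem_filter]; exact ⟨mem_univ i, h⟩)
      rw [ht]; simp only [hiR, if_pos]
      exact hcq i
    · push_neg at h
      rw [ht]
      by_cases h2 : i ∈ R <;> simp [h2] <;> omega
  -- leftover goods
  set L := (univ : Finset (Fin m)) \ univ.biUnion T with hL
  have hbUcard : (univ.biUnion T).card = ∑ i, c i :=
    card_biUnion (fun i _ j _ hij => hTdisj i j hij)
  have hLcard : L.card = m - ∑ i, c i := by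
    rw [hL, card_sdiff_of_subset (subset_univ _), hbUcard]; simp
  set d := fun i => t i - c i with hd
  have hcsum : ∑ i, d i + ∑ i, c i = ∑ i, t i := by
    rw [← sum_add_distrib]
    exact sum_congr rfl fun i _ => by
      have h1 := hct i
      have h2 : d i = t i - c i := rfl
      omega
  have hcle : ∑ i, c i ≤ m := by omega
  have hdsum : ∑ i, d i = L.card := by omega
  obtain ⟨D, hDsub, hDcard, hDcov, hDdisj⟩ := exists_partition n L d hdsum
  set P := fun i => T i ∪ D i with hP
  have hTDdisj : ∀ i j : Fin n, Disjoint (T i) (D j) := by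
    intro i j
    rw [Finset.disjoint_left]
    intro x hx hx2
    have hxL := hDsub j hx2
    rw [hL, mem_sdiff] at hxL
    exact hxL.2 (mem_biUnion.mpr ⟨i, mem_univ i, hx⟩)
  have hPcard : ∀ i, (P i).card = t i := by
    intro i
    rw [hP]
    rw [card_union_of_disjoint (hTDdisj i i), hDcard]
    have h1 := hct i
    have h2 : d i = t i - c i := rfl
    have h3 : c i = (T i).card := rfl
    omega
  have hPdisj : ∀ i j : Fin n, i ≠ j → Disjoint (P i) (P j) := by
    intro i j hij
    rw [hP]
    simp only [disjoint_union_left, disjoint_union_right]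
    exact ⟨⟨hTdisj i j hij, (hTDdisj j i).symm⟩, ⟨hTDdisj i j, hDdisj i j hij⟩⟩
  have hPcov : ∀ g, ∃ i, g ∈ P i := by
    intro g
    by_cases h : g ∈ univ.biUnion T
    · obtain ⟨i, _, hi⟩ := mem_biUnion.mp h
      exact ⟨i, mem_union_left _ hi⟩
    · obtain ⟨i, hi⟩ := hDcov g (by rw [hL, mem_sdiff]; exact ⟨mem_univ g, h⟩)
      exact ⟨i, mem_union_right _ hi⟩
  choose B hB using hPcov
  have hbundle : ∀ i, bundle B i = P i := by
    intro i
    ext g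
    simp only [bundle, mem_filter, mem_univ, true_and]
    constructor
    · rintro rfl; exact hB g
    · intro hg
      by_contra hne
      exact (Finset.disjoint_left.mp (hPdisj (B g) i hne) (hB g)) hg
  refine ⟨B, ?_, ?_⟩
  · intro i j
    have hcardi : ((bundle B i).card : ℤ) = t i := by rw [hbundle, hPcard]
    have hcardj : ((bundle B j).card : ℤ) = t j := by rw [hbundle, hPcard]
    simp only [Set.mem_insert_iff, Set.mem_singleton_iff]
    rw [hcardi, hcardj, ht]
    by_cases h1 : i ∈ R <;> by_cases h2 : j ∈ R <;> simp [h1, h2] <;> push_cast <;> omega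
  · intro i
    have hn' : (0 : ℝ) < n := by exact_mod_cast hn
    have h1 : (1 / (n : ℝ)) * (∑ g ∈ bundle A i, u i g) ≤ ∑ g ∈ T i, u i g := by
      rw [one_div, inv_mul_le_iff₀ hn']
      exact hTval i
    have h2 : ∑ g ∈ T i, u i g ≤ ∑ g ∈ P i, u i g :=
      sum_le_sum_of_subset_of_nonneg subset_union_left (fun g _ _ => hpos i g)
    rw [util, util, hbundle]
    linarith


/-- For every instance and every allocation `A` there is a balanced allocation `B`
giving every agent at least a `1/n` fraction of her utility in `A`; consequently
`MEW ≤ n · EW(B)` for some balanced `B`, so the egalitarian price of fairness of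
balancedness is at most `n`. -/
theorem balanced_egal_pof_upper (n m : ℕ) (hn : 0 < n) (u : Fin n → Fin m → ℝ)
    (hpos : ∀ i g, 0 ≤ u i g) (hnorm : ∀ i, ∑ g, u i g = 1)
    (A : Fin m → Fin n) :
    (∃ B : Fin m → Fin n, BalancedAlloc B ∧
        ∀ i, (1 / (n : ℝ)) * util u A i ≤ util u B i) ∧
      ∃ B : Fin m → Fin n, BalancedAlloc B ∧
        maxEgalWelfare u ≤ (n : ℝ) * egalWelfare u B := by
  have hn' : (0 : ℝ) < n := by exact_mod_cast hn
  haveI : Nonempty (Fin n) := ⟨⟨0, hn⟩⟩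
  constructor
  · exact exists_balanced hn u hpos A
  · -- take an allocation attaining the supremum
    obtain ⟨f₀, hf₀⟩ := Finite.exists_max (fun f : Fin m → Fin n => egalWelfare u f)
    obtain ⟨B, hBbal, hBge⟩ := exists_balanced hn u hpos f₀
    refine ⟨B, hBbal, ?_⟩
    have hsup : maxEgalWelfare u ≤ egalWelfare u f₀ := ciSup_le hf₀
    have hstep : (1 / (n : ℝ)) * egalWelfare u f₀ ≤ egalWelfare u B := by
      apply le_ciInf
      intro i
      have h1 : egalWelfare u f₀ ≤ util u f₀ i :=
        ciInf_le (Finite.bddBelow_range _) i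
      have h2 : (1 / (n : ℝ)) * egalWelfare u f₀ ≤ (1 / (n : ℝ)) * util u f₀ i :=
        mul_le_mul_of_nonneg_left h1 (by positivity)
      exact h2.trans (hBge i)
    calc maxEgalWelfare u ≤ egalWelfare u f₀ := hsup
      _ = (n : ℝ) * ((1 / (n : ℝ)) * egalWelfare u f₀) := by
          field_simp
      _ ≤ (n : ℝ) * egalWelfare u B :=
          mul_le_mul_of_nonneg_left hstep (le_of_lt hn')
end

section
/- Consider a fair-division instance with n agents and exactly m = n indivisible goods, and let A be a balanced allocation (i.e., A assigns exactly one good to each agent). Then there exists an allocation B that is producible by the round-robin algorithm for some ordering of the agents and some tie-breaking, such that B weakly dominates A, i.e., u_i(B_i) ≥ u_i(A_i) for every agent i. -/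
open Finset

/-- `IsRoundRobin hn u f` holds when the allocation `f` is producible by the
round-robin algorithm: there is an ordering `σ` of the agents and a bijective
sequence `pick` of picks such that on turn `t` the agent `σ (t mod n)` takes a
good of maximum utility (to her) among the goods not yet picked, receiving it
in `f`. -/
def IsRoundRobin {n m : ℕ} (hn : 0 < n) (u : Fin n → Fin m → ℝ)
    (f : Fin m → Fin n) : Prop :=
  ∃ σ : Fin n → Fin n, Function.Bijective σ ∧
    ∃ pick : Fin m → Fin m, Function.Bijective pick ∧
      ∀ t : Fin m,
        f (pick t) = σ ⟨t.val % n, Nat.mod_lt _ hn⟩ ∧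
        ∀ g : Fin m, (∀ s : Fin m, s < t → pick s ≠ g) →
          u (σ ⟨t.val % n, Nat.mod_lt _ hn⟩) g ≤
            u (σ ⟨t.val % n, Nat.mod_lt _ hn⟩) (pick t)

/-!
Among the balanced allocations weakly dominating `A`, take one of maximal utilitarian welfare:
no reassignment of its goods makes some agent better off and nobody worse off. Hence every
nonempty set of agents contains one who likes her own good best among the goods of the set;
otherwise "i prefers the good of j" would contain a cycle, and trading along it would be a
Pareto improvement. Repeatedly removing such an agent orders the agents so that, in the
round-robin run with this order, each agent's good is still available on her turn and is a
best remaining good for her.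
-/

theorem Function.exists_iterate_mem_periodicPts {α : Type*} [Finite α] (f : α → α) (x : α) :
    ∃ k, f^[k] x ∈ Function.periodicPts f := by
  obtain ⟨m, n, heq, hne⟩ : ∃ m n, f^[m] x = f^[n] x ∧ m ≠ n := by
    simpa [Function.Injective] using not_injective_infinite_finite (f^[·] x)
  wlog hlt : m < n generalizing m n
  · exact this n m heq.symm hne.symm (by omega)
  refine ⟨m, Function.mk_mem_periodicPts (n := n - m) (by omega) ?_⟩
  rw [Function.IsPeriodicPt, Function.IsFixedPt, ← Function.iterate_add_apply,
    Nat.sub_add_cancel hlt.le, heq]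

theorem List.exists_nodup_pairwise_of_exists_forall {α : Type*} [DecidableEq α]
    (r : α → α → Prop) (h : ∀ t : Finset α, t.Nonempty → ∃ i ∈ t, ∀ j ∈ t, r i j)
    (s : Finset α) : ∃ L : List α, L.Nodup ∧ L.toFinset = s ∧ L.Pairwise r := by
  induction s using Finset.strongInduction with
  | H s ih =>
    rcases s.eq_empty_or_nonempty with rfl | hs
    · exact ⟨[], List.nodup_nil, rfl, List.Pairwise.nil⟩
    obtain ⟨i, hi, hir⟩ := h s hs
    obtain ⟨L, hnd, hL, hpw⟩ := ih (s.erase i) (Finset.erase_ssubset hi)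
    refine ⟨i :: L, List.nodup_cons.mpr ⟨?_, hnd⟩, ?_, List.pairwise_cons.mpr ⟨?_, hpw⟩⟩
    · simpa [← hL] using Finset.notMem_erase i s
    · rw [List.toFinset_cons, hL, Finset.insert_erase hi]
    · intro j hj
      exact hir j (Finset.mem_of_mem_erase (hL ▸ List.mem_toFinset.mpr hj))

theorem exists_equiv_fin_forall_lt_of_exists_forall {α : Type*} [Fintype α]
    {n : ℕ} (hcard : Fintype.card α = n) (r : α → α → Prop)
    (h : ∀ t : Finset α, t.Nonempty → ∃ i ∈ t, ∀ j ∈ t, r i j) :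
    ∃ σ : Fin n ≃ α, ∀ s t, s < t → r (σ s) (σ t) := by
  classical
  obtain ⟨L, hnd, hL, hpw⟩ := List.exists_nodup_pairwise_of_exists_forall r h Finset.univ
  have hmem : ∀ x, x ∈ L := fun x => List.mem_toFinset.mp (hL ▸ Finset.mem_univ x)
  have hlen : L.length = n := by
    rw [← List.toFinset_card_of_nodup hnd, hL, Finset.card_univ, hcard]
  refine ⟨(finCongr hlen.symm).trans (hnd.getEquivOfForallMemList L hmem), fun s t hst => ?_⟩
  exact List.pairwise_iff_getElem.mp hpw s t _ _ hst

section Matching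

variable {α β γ : Type*}

def IsParetoOptimalMatching [LE γ] (v : α → β → γ) (C : α → β) : Prop :=
  ∀ ψ : Equiv.Perm α, (∀ i, v i (C i) ≤ v i (C (ψ i))) → ∀ i, v i (C (ψ i)) ≤ v i (C i)

theorem exists_isParetoOptimalMatching_ge [Fintype α] (v : α → β → ℝ) (D : α ≃ β) :
    ∃ C : α ≃ β, (∀ i, v i (D i) ≤ v i (C i)) ∧ IsParetoOptimalMatching v C := by
  let S := {C : α ≃ β // ∀ i, v i (D i) ≤ v i (C i)}
  have : Nonempty S := ⟨⟨D, fun i => le_rfl⟩⟩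
  obtain ⟨⟨C, hCD⟩, hCmax⟩ := Finite.exists_max (fun C : S => ∑ i, v i (C.val i))
  refine ⟨C, hCD, fun ψ hψ => ?_⟩
  have hsum : ∑ i, v i (C (ψ i)) ≤ ∑ i, v i (C i) :=
    hCmax ⟨ψ.trans C, fun i => (hCD i).trans (hψ i)⟩
  intro i
  by_contra! hlt
  exact (Finset.sum_lt_sum (fun i _ => hψ i) ⟨i, Finset.mem_univ i, hlt⟩).not_ge hsum

theorem IsParetoOptimalMatching.exists_forall_le [Finite α] [LinearOrder γ] {v : α → β → γ}
    {C : α → β} (hC : IsParetoOptimalMatching v C) {R : Finset α} (hR : R.Nonempty) :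
    ∃ i ∈ R, ∀ j ∈ R, v i (C j) ≤ v i (C i) := by
  classical
  by_contra! hR'
  obtain ⟨r, hr⟩ := hR
  choose! φ hφR hφ using hR'
  let f : α → α := fun i => if i ∈ R then φ i else r
  have hfR : ∀ i, f i ∈ R := fun i => by by_cases hi : i ∈ R <;> simp [f, hi, hφR, hr]
  set P := Function.periodicPts f
  have hPR : ∀ x ∈ P, x ∈ R := fun x hx => by
    obtain ⟨y, rfl⟩ := Function.periodicPts_subset_range hx
    exact hfR y
  obtain ⟨k, hk⟩ := Function.exists_iterate_mem_periodicPts f r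
  -- trading along the cycles of `f` is a strict gain for every agent on them
  let ψ : Equiv.Perm α := Equiv.Perm.ofSubtype ((Function.bijOn_periodicPts f).equiv f)
  have hψ : ∀ x ∈ P, ψ x = φ x := fun x hx => by
    simp [ψ, Equiv.Perm.ofSubtype_apply_of_mem _ hx, Set.BijOn.equiv, f, hPR x hx]
  have hgain : ∀ i, v i (C i) ≤ v i (C (ψ i)) := fun i => by
    by_cases hi : i ∈ P
    · rw [hψ i hi]; exact (hφ i (hPR i hi)).le
    · rw [Equiv.Perm.ofSubtype_apply_of_not_mem _ hi]
  have := hC ψ hgain (f^[k] r)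
  rw [hψ _ hk] at this
  exact (hφ _ (hPR _ hk)).not_ge this

end Matching

theorem util_equiv {n m : ℕ} (u : Fin n → Fin m → ℝ) (e : Fin m ≃ Fin n) (i : Fin n) :
    util u e i = u i (e.symm i) := by
  have hb : bundle e i = {e.symm i} := by
    ext g
    simp [bundle, Equiv.eq_symm_apply]
  rw [util, hb, Finset.sum_singleton]

theorem isRoundRobin_of_forall_lt {n : ℕ} (hn : 0 < n) (u : Fin n → Fin n → ℝ)
    (C σ : Fin n ≃ Fin n) (hσ : ∀ s t, s < t → u (σ s) (C (σ t)) ≤ u (σ s) (C (σ s))) :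
    IsRoundRobin hn u C.symm := by
  refine ⟨σ, σ.bijective, C ∘ σ, C.bijective.comp σ.bijective, fun t => ?_⟩
  have ht : (⟨t.val % n, Nat.mod_lt _ hn⟩ : Fin n) = t := Fin.ext (Nat.mod_eq_of_lt t.isLt)
  rw [ht]
  refine ⟨C.symm_apply_apply (σ t), fun g hg => ?_⟩
  obtain ⟨s, rfl⟩ := (σ.trans C).surjective g
  have hts : t ≤ s := not_lt.mp fun hst => hg s hst rfl
  rcases hts.eq_or_lt with rfl | hts
  · exact le_rfl
  · exact hσ t s hts

theorem roundRobin_dominates_balanced_general (n : ℕ) (hn : 0 < n)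
    (u : Fin n → Fin n → ℝ)
    (A : Fin n → Fin n) (hA : Function.Bijective A) :
    ∃ B : Fin n → Fin n, IsRoundRobin hn u B ∧
      ∀ i, util u A i ≤ util u B i := by
  let Ae := Equiv.ofBijective A hA
  obtain ⟨C, hCA, hC⟩ := exists_isParetoOptimalMatching_ge u Ae.symm
  obtain ⟨σ, hσ⟩ := exists_equiv_fin_forall_lt_of_exists_forall (Fintype.card_fin n)
    (fun i j => u i (C j) ≤ u i (C i)) fun R hR => hC.exists_forall_le hR
  refine ⟨C.symm, isRoundRobin_of_forall_lt hn u C σ hσ, fun i => ?_⟩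
  rw [show A = Ae from rfl, util_equiv, util_equiv, Equiv.symm_symm]
  exact hCA i

/-- For an instance with `n` agents and exactly `n` goods, any balanced allocation
(i.e. a bijection assigning one good to each agent) is weakly dominated by some
allocation producible by the round-robin algorithm. -/
theorem roundRobin_dominates_balanced (n : ℕ) (hn : 0 < n)
    (u : Fin n → Fin n → ℝ) (hpos : ∀ i g, 0 ≤ u i g)
    (A : Fin n → Fin n) (hA : Function.Bijective A) :
    ∃ B : Fin n → Fin n, IsRoundRobin hn u B ∧
      ∀ i, util u A i ≤ util u B i :=
  roundRobin_dominates_balanced_general n hn u A hA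
end

section
/- For every fair-division instance with n agents, there exists an allocation B producible by the round-robin algorithm (for some ordering of the agents and some tie-breaking) such that MEW ≤ (2n − 1)·EW(B). Consequently, the egalitarian price of fairness of round-robin over instances with n agents is at most 2n − 1. -/
open Finset

namespace RRp


variable {n m : ℕ}

noncomputable def amax (w : Fin m → ℝ) (s : Finset (Fin m)) (hm : 0 < m) : Fin m :=
  if h : s.Nonempty then (s.exists_max_image w h).choose else ⟨0, hm⟩

lemma amax_mem {w : Fin m → ℝ} {s : Finset (Fin m)} (hm : 0 < m) (h : s.Nonempty) :
    amax w s hm ∈ s := by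
  rw [amax, dif_pos h]
  exact (s.exists_max_image w h).choose_spec.1

lemma amax_max {w : Fin m → ℝ} {s : Finset (Fin m)} (hm : 0 < m) (h : s.Nonempty) :
    ∀ g ∈ s, w g ≤ w (amax w s hm) := by
  rw [amax, dif_pos h]
  exact (s.exists_max_image w h).choose_spec.2

variable (v : ℕ → Fin m → ℝ) (c : ℕ → Fin m) (k : ℕ) (hm : 0 < m)

noncomputable def S : ℕ → Finset (Fin m)
  | 0 => univ
  | t+1 => (S t).erase (if t < k then c t else amax (v t) (S t) hm)

noncomputable def pk (t : ℕ) : Fin m :=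
  if t < k then c t else amax (v t) (S v c k hm t) hm

lemma S_succ (t : ℕ) : S v c k hm (t+1) = (S v c k hm t).erase (pk v c k hm t) := rfl

variable (hcinj : ∀ p q, p < k → q < k → c p = c q → p = q)

lemma S_eq (t : ℕ) (ht : t ≤ k) : S v c k hm t = univ \ (range t).image c := by
  induction t with
  | zero => simp [S]
  | succ t ih =>
    rw [S_succ, ih (le_of_lt ht), pk, if_pos (show t < k from ht), range_add_one, image_insert,
      Finset.sdiff_insert]

include hcinj in
lemma pk_mem_card : ∀ t, t < m → pk v c k hm t ∈ S v c k hm t ∧ (S v c k hm t).card = m - t := by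
  have hmem : ∀ t, (S v c k hm t).Nonempty → pk v c k hm t ∈ S v c k hm t := by
    intro t hne
    by_cases htk : t < k
    · rw [pk, if_pos htk, S_eq v c k hm t (le_of_lt htk)]
      simp only [mem_sdiff, mem_univ, true_and, mem_image, mem_range, not_exists]
      intro a ha
      exact absurd (hcinj a t (lt_trans ha.1 htk) htk ha.2) (Nat.ne_of_lt ha.1)
    · rw [pk, if_neg htk]
      exact amax_mem hm hne
  have key : ∀ t, t ≤ m → (S v c k hm t).card = m - t := by
    intro t
    induction t with
    | zero => intro _; simp [S]
    | succ t ih =>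
      intro ht
      have htm : t < m := ht
      have hcard := ih (le_of_lt htm)
      have hne : (S v c k hm t).Nonempty := by
        rw [← Finset.card_pos, hcard]; omega
      rw [S_succ, Finset.card_erase_of_mem (hmem t hne), hcard]
      omega
  intro t htm
  have hcard := key t (le_of_lt htm)
  have hne : (S v c k hm t).Nonempty := by
    rw [← Finset.card_pos, hcard]; omega
  exact ⟨hmem t hne, hcard⟩

lemma S_anti {t t' : ℕ} (h : t ≤ t') : S v c k hm t' ⊆ S v c k hm t := by
  induction t' with
  | zero => simp_all
  | succ t' ih =>
    rcases Nat.lt_or_ge t (t'+1) with h' | h'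
    · exact (S_succ v c k hm t' ▸ Finset.erase_subset _ _).trans (ih (Nat.lt_succ_iff.mp h'))
    · have : t = t' + 1 := le_antisymm h h'
      subst this; exact subset_rfl

include hcinj in
lemma pk_inj : ∀ t t', t < t' → t' < m → pk v c k hm t ≠ pk v c k hm t' := by
  intro t t' h h' he
  have h1 : pk v c k hm t' ∈ S v c k hm t' := (pk_mem_card v c k hm hcinj t' h').1
  have h2 : S v c k hm t' ⊆ S v c k hm (t+1) := S_anti v c k hm h
  have := h2 h1
  rw [S_succ] at this
  exact (Finset.mem_erase.mp this).1 he.symm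

lemma S_eq_pk (t : ℕ) : S v c k hm t = univ \ (range t).image (pk v c k hm) := by
  induction t with
  | zero => simp [S]
  | succ t ih =>
    rw [S_succ, ih, range_add_one, image_insert, Finset.sdiff_insert]

variable (hcg : ∀ t, t < k → ∀ g : Fin m, (∀ s, s < t → c s ≠ g) → v t g ≤ v t (c t))

include hcinj hcg in
lemma pk_greedy : ∀ t, t < m → ∀ g ∈ S v c k hm t, v t g ≤ v t (pk v c k hm t) := by
  intro t htm g hg
  by_cases htk : t < k
  · rw [pk, if_pos htk]
    refine hcg t htk g ?_
    intro s hs he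
    rw [S_eq v c k hm t (le_of_lt htk)] at hg
    simp only [mem_sdiff, mem_univ, true_and, mem_image, mem_range, not_exists] at hg
    exact hg s ⟨hs, he⟩
  · rw [pk, if_neg htk]
    have hcard := (pk_mem_card v c k hm hcinj t htm).2
    have hne : (S v c k hm t).Nonempty := by
      rw [← Finset.card_pos, hcard]; omega
    exact amax_max hm hne g hg



section Plan
variable (u : Fin n → Fin m → ℝ) (γ : Fin n → ℝ)

def Plan : Finset (Fin n) → Finset (Fin m) → List (Fin n × Fin m) → Prop
  | R, _, [] => R = ∅
  | R, G, ig :: l => ig.1 ∈ R ∧ ig.2 ∈ G ∧ (∀ g ∈ G, u ig.1 g ≤ u ig.1 ig.2) ∧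
      γ ig.1 ≤ u ig.1 ig.2 ∧ Plan (R.erase ig.1) (G.erase ig.2) l

lemma plan_chain (gs : Fin n → Fin m) (φ : Fin n → Fin n) (Gbig : Finset (Fin m)) :
    ∀ (d : ℕ) (R' : Finset (Fin n)) (G' : Finset (Fin m)) (s : Fin n),
    (∀ k, k < d → φ^[k] s ∈ R') →
    (∀ k, k < d → gs (φ^[k+1] s) ∈ G') →
    (∀ k l, k < l → l < d → φ^[k] s ≠ φ^[l] s) →
    (∀ k l, k < l → l < d → gs (φ^[k+1] s) ≠ gs (φ^[l+1] s)) →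
    (∀ k, k < d → ∀ g ∈ Gbig, u (φ^[k] s) g ≤ u (φ^[k] s) (gs (φ^[k+1] s))) →
    (∀ k, k < d → γ (φ^[k] s) ≤ u (φ^[k] s) (gs (φ^[k+1] s))) →
    G' ⊆ Gbig →
    (∃ l, Plan u γ (R' \ (range d).image (fun k => φ^[k] s))
                   (G' \ (range d).image (fun k => gs (φ^[k+1] s))) l) →
    ∃ l, Plan u γ R' G' l := by
  intro d
  induction d with
  | zero =>
    intro R' G' s _ _ _ _ _ _ _ hrest
    simpa using hrest
  | succ d ih =>
    intro R' G' s hRs hGs hndR hndG hmax hγc hsub hrest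
    refine ⟨(s, gs (φ s)) :: ?_, ?_, ?_, ?_, ?_, ?_⟩
    rotate_left
    · exact hRs 0 (Nat.succ_pos d)
    · simpa using hGs 0 (Nat.succ_pos d)
    · intro g hg
      simpa using hmax 0 (Nat.succ_pos d) g (hsub hg)
    · simpa using hγc 0 (Nat.succ_pos d)
    refine (ih (R'.erase s) (G'.erase (gs (φ s))) (φ s) ?_ ?_ ?_ ?_ ?_ ?_ ?_ ?_).choose_spec
    · intro k hk
      rw [← Function.iterate_succ_apply]
      refine Finset.mem_erase.mpr ⟨?_, hRs (k+1) (by omega)⟩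
      simpa using (hndR 0 (k+1) (by omega) (by omega)).symm
    · intro k hk
      rw [← Function.iterate_succ_apply]
      refine Finset.mem_erase.mpr ⟨?_, hGs (k+1) (by omega)⟩
      have := (hndG 0 (k+1) (by omega) (by omega)).symm
      simpa using this
    · intro k l hkl hld
      rw [← Function.iterate_succ_apply, ← Function.iterate_succ_apply]
      exact hndR (k+1) (l+1) (by omega) (by omega)
    · intro k l hkl hld
      rw [← Function.iterate_succ_apply, ← Function.iterate_succ_apply]
      exact hndG (k+1) (l+1) (by omega) (by omega)
    · intro k hk g hg
      rw [← Function.iterate_succ_apply, ← Function.iterate_succ_apply]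
      exact hmax (k+1) (by omega) g hg
    · intro k hk
      rw [← Function.iterate_succ_apply, ← Function.iterate_succ_apply]
      exact hγc (k+1) (by omega)
    · exact (Finset.erase_subset _ _).trans hsub
    · obtain ⟨l, hl⟩ := hrest
      refine ⟨l, ?_⟩
      have hR : (R'.erase s) \ (range d).image (fun k => φ^[k] (φ s))
          = R' \ (range (d+1)).image (fun k => φ^[k] s) := by
        ext i
        simp only [Finset.mem_sdiff, Finset.mem_erase, Finset.mem_image, Finset.mem_range,
          not_exists, not_and]
        constructor
        · rintro ⟨⟨hne, hiR⟩, hall⟩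
          refine ⟨hiR, ?_⟩
          intro k hk
          match k with
          | 0 => simpa using fun e => hne e.symm
          | (k+1) =>
            rw [Function.iterate_succ_apply]
            exact hall k (by omega)
        · rintro ⟨hiR, hall⟩
          refine ⟨⟨?_, hiR⟩, ?_⟩
          · have := hall 0 (by omega)
            simpa using fun e => this e.symm
          · intro k hk
            rw [← Function.iterate_succ_apply]
            exact hall (k+1) (by omega)
      have hG : (G'.erase (gs (φ s))) \ (range d).image (fun k => gs (φ^[k+1] (φ s)))
          = G' \ (range (d+1)).image (fun k => gs (φ^[k+1] s)) := by
        ext g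
        simp only [Finset.mem_sdiff, Finset.mem_erase, Finset.mem_image, Finset.mem_range,
          not_exists, not_and]
        constructor
        · rintro ⟨⟨hne, hgG⟩, hall⟩
          refine ⟨hgG, ?_⟩
          intro k hk
          match k with
          | 0 => simpa using fun e => hne e.symm
          | (k+1) =>
            rw [Function.iterate_succ_apply]
            exact hall k (by omega)
        · rintro ⟨hgG, hall⟩
          refine ⟨⟨?_, hgG⟩, ?_⟩
          · have := hall 0 (by omega)
            simpa using fun e => this e.symm
          · intro k hk
            rw [← Function.iterate_succ_apply]
            exact hall (k+1) (by omega)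
      rwa [hR, hG]





lemma plan_exists (gs : Fin n → Fin m) (hgs : Function.Injective gs)
    (hγ : ∀ i, γ i ≤ u i (gs i)) :
    ∀ (N : ℕ) (R : Finset (Fin n)) (G : Finset (Fin m)), R.card ≤ N →
      (∀ i ∈ R, gs i ∈ G) → ∃ l, Plan u γ R G l := by
  intro N
  induction N with
  | zero =>
    intro R G hR _
    exact ⟨[], Finset.card_eq_zero.mp (Nat.le_zero.mp hR)⟩
  | succ N ih =>
    intro R G hRcard hinv
    rcases R.eq_empty_or_nonempty with rfl | ⟨j₀, hj₀⟩
    · exact ⟨[], rfl⟩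
    by_cases hA : ∃ j ∈ R, ∃ b ∈ G, (∀ g ∈ G, u j g ≤ u j b) ∧ ∀ i ∈ R, i ≠ j → gs i ≠ b
    · obtain ⟨j, hj, b, hbG, hbmax, havoid⟩ := hA
      have hcard : (R.erase j).card ≤ N := by
        rw [Finset.card_erase_of_mem hj]
        omega
      have hinv' : ∀ i ∈ R.erase j, gs i ∈ G.erase b := by
        intro i hi
        rw [Finset.mem_erase] at hi
        exact Finset.mem_erase.mpr ⟨havoid i hi.2 hi.1, hinv i hi.2⟩
      obtain ⟨l, hl⟩ := ih (R.erase j) (G.erase b) hcard hinv'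
      exact ⟨(j, b) :: l, hj, hbG, hbmax, le_trans (hγ j) (hbmax (gs j) (hinv j hj)), hl⟩
    · push_neg at hA
      -- for each j in R, pick an argmax b over G; it is gs of another member of R
      have hstep : ∀ j, ∃ i, j ∈ R → i ∈ R ∧ i ≠ j ∧ gs i ∈ G ∧
          (∀ g ∈ G, u j g ≤ u j (gs i)) := by
        intro j
        by_cases hj : j ∈ R
        · obtain ⟨b, hbG, hbmax⟩ := Finset.exists_max_image G (u j) ⟨gs j, hinv j hj⟩
          obtain ⟨i, hiR, hij, hgsib⟩ := hA j hj b hbG hbmax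
          refine ⟨i, fun _ => ⟨hiR, hij, ?_, ?_⟩⟩
          · rw [hgsib]; exact hbG
          · rw [hgsib]; exact hbmax
        · exact ⟨j₀, fun h => absurd h hj⟩
      set φ : Fin n → Fin n := fun j => Classical.choose (hstep j) with hφdef
      have hφ : ∀ j ∈ R, φ j ∈ R ∧ φ j ≠ j ∧ gs (φ j) ∈ G ∧
          (∀ g ∈ G, u j g ≤ u j (gs (φ j))) := fun j hj => Classical.choose_spec (hstep j) hj
      -- iterates from any member of R stay in R
      have hiter : ∀ (j : Fin n), j ∈ R → ∀ t, φ^[t] j ∈ R := by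
        intro j hj t
        induction t with
        | zero => simpa using hj
        | succ t iht =>
          rw [Function.iterate_succ_apply']
          exact (hφ _ iht).1
      -- find a periodic point
      obtain ⟨a, b, hab, he⟩ := Finite.exists_ne_map_eq_of_infinite (fun t : ℕ => φ^[t] j₀)
      wlog hab' : a < b generalizing a b
      · exact this b a hab.symm he.symm (by omega)
      have hper : ∃ r, 0 < r ∧ φ^[r] (φ^[a] j₀) = φ^[a] j₀ := by
        refine ⟨b - a, by omega, ?_⟩
        rw [← Function.iterate_add_apply]
        have : b - a + a = b := by omega
        rw [this]
        exact he.symm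
      set j : Fin n := φ^[a] j₀ with hjdef
      have hjR : j ∈ R := hiter j₀ hj₀ a
      set r : ℕ := Nat.find hper with hrdef
      have hrspec : 0 < r ∧ φ^[r] j = j := Nat.find_spec hper
      have hrmin : ∀ r', r' < r → ¬(0 < r' ∧ φ^[r'] j = j) := fun r' h => Nat.find_min hper h
      -- distinctness along the cycle
      have hdist : ∀ a' b', a' < b' → b' ≤ r → ¬(a' = 0 ∧ b' = r) → φ^[a'] j ≠ φ^[b'] j := by
        intro a' b' h1 h2 h3 he'
        have h4 : φ^[r - b' + a'] j = j := by
          rw [Function.iterate_add_apply, he', ← Function.iterate_add_apply]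
          have e : r - b' + b' = r := by omega
          rw [e]; exact hrspec.2
        have h5 : 0 < r - b' + a' := by
          rcases Nat.eq_zero_or_pos a' with rfl | h
          · have : b' ≠ r := fun e => h3 ⟨rfl, e⟩
            omega
          · omega
        exact hrmin _ (by omega) ⟨h5, h4⟩
      -- apply the chain lemma
      have hiterj : ∀ t, φ^[t] j ∈ R := fun t => hiter j hjR t
      refine plan_chain u γ gs φ G r R G j ?_ ?_ ?_ ?_ ?_ ?_ subset_rfl ?_
      · intro k _; exact hiterj k
      · intro k hk
        rw [Function.iterate_succ_apply']
        exact (hφ _ (hiterj k)).2.2.1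
      · intro k l h1 h2
        exact hdist k l h1 (le_of_lt h2) (fun ⟨_, e⟩ => absurd e (Nat.ne_of_lt h2))
      · intro k l h1 h2
        intro he'
        exact hdist (k+1) (l+1) (by omega) (by omega) (by omega) (hgs he')
      · intro k _ g hg
        have := (hφ _ (hiterj k)).2.2.2 g hg
        rwa [Function.iterate_succ_apply']
      · intro k _
        refine le_trans (hγ _) ?_
        have := (hφ _ (hiterj k)).2.2.2 (gs (φ^[k] j)) (hinv _ (hiterj k))
        rwa [Function.iterate_succ_apply']
      · -- the rest, by strong induction
        set C : Finset (Fin n) := (range r).image (fun k => φ^[k] j) with hCdef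
        have hjC : j ∈ C := by
          rw [hCdef]
          exact Finset.mem_image.mpr ⟨0, Finset.mem_range.mpr hrspec.1, rfl⟩
        have hcard : (R \ C).card ≤ N := by
          have h1 : R \ C ⊂ R := by
            refine Finset.ssubset_iff_of_subset (Finset.sdiff_subset) |>.mpr ?_
            exact ⟨j, hjR, fun h => (Finset.mem_sdiff.mp h).2 hjC⟩
          have := Finset.card_lt_card h1
          omega
        refine ih (R \ C) (G \ (range r).image (fun k => gs (φ^[k+1] j))) hcard ?_
        intro i hi
        rw [Finset.mem_sdiff] at hi
        rw [Finset.mem_sdiff]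
        refine ⟨hinv i hi.1, ?_⟩
        intro hmem
        obtain ⟨k, hk, hke⟩ := Finset.mem_image.mp hmem
        rw [Finset.mem_range] at hk
        apply hi.2
        rw [hCdef]
        refine Finset.mem_image.mpr ?_
        rcases Nat.lt_or_ge (k+1) r with h | h
        · exact ⟨k+1, Finset.mem_range.mpr h, hgs hke⟩
        · have hkr : k + 1 = r := by omega
          refine ⟨0, Finset.mem_range.mpr hrspec.1, ?_⟩
          have : φ^[k+1] j = j := by rw [hkr]; exact hrspec.2
          rw [this] at hke
          simpa using hgs hke




lemma plan_length : ∀ (l : List (Fin n × Fin m)) (R : Finset (Fin n)) (G : Finset (Fin m)),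
    Plan u γ R G l → l.length = R.card := by
  intro l
  induction l with
  | nil => intro R G h; rw [show R = ∅ from h]; simp
  | cons ig rest ih =>
    intro R G h
    have := ih _ _ h.2.2.2.2
    simp only [List.length_cons, this, Finset.card_erase_of_mem h.1]
    have : 0 < R.card := Finset.card_pos.mpr ⟨ig.1, h.1⟩
    omega

lemma plan_fst_mem : ∀ (l : List (Fin n × Fin m)) (R : Finset (Fin n)) (G : Finset (Fin m)),
    Plan u γ R G l → ∀ p ∈ l, p.1 ∈ R := by
  intro l
  induction l with
  | nil => intro R G _ p hp; simp at hp
  | cons ig rest ih =>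
    intro R G h p hp
    rcases List.mem_cons.mp hp with rfl | hp'
    · exact h.1
    · exact Finset.erase_subset _ _ (ih _ _ h.2.2.2.2 p hp')

lemma plan_snd_mem : ∀ (l : List (Fin n × Fin m)) (R : Finset (Fin n)) (G : Finset (Fin m)),
    Plan u γ R G l → ∀ p ∈ l, p.2 ∈ G := by
  intro l
  induction l with
  | nil => intro R G _ p hp; simp at hp
  | cons ig rest ih =>
    intro R G h p hp
    rcases List.mem_cons.mp hp with rfl | hp'
    · exact h.2.1
    · exact Finset.erase_subset _ _ (ih _ _ h.2.2.2.2 p hp')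

lemma plan_fst_nodup : ∀ (l : List (Fin n × Fin m)) (R : Finset (Fin n)) (G : Finset (Fin m)),
    Plan u γ R G l → (l.map Prod.fst).Nodup := by
  intro l
  induction l with
  | nil => intro _ _ _; simp
  | cons ig rest ih =>
    intro R G h
    simp only [List.map_cons, List.nodup_cons]
    refine ⟨?_, ih _ _ h.2.2.2.2⟩
    intro hmem
    obtain ⟨p, hp, he⟩ := List.mem_map.mp hmem
    have := plan_fst_mem u γ rest _ _ h.2.2.2.2 p hp
    rw [he] at this
    exact (Finset.mem_erase.mp this).1 rfl

lemma plan_snd_nodup : ∀ (l : List (Fin n × Fin m)) (R : Finset (Fin n)) (G : Finset (Fin m)),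
    Plan u γ R G l → (l.map Prod.snd).Nodup := by
  intro l
  induction l with
  | nil => intro _ _ _; simp
  | cons ig rest ih =>
    intro R G h
    simp only [List.map_cons, List.nodup_cons]
    refine ⟨?_, ih _ _ h.2.2.2.2⟩
    intro hmem
    obtain ⟨p, hp, he⟩ := List.mem_map.mp hmem
    have := plan_snd_mem u γ rest _ _ h.2.2.2.2 p hp
    rw [he] at this
    exact (Finset.mem_erase.mp this).1 rfl

lemma plan_spec : ∀ (l : List (Fin n × Fin m)) (R : Finset (Fin n)) (G : Finset (Fin m)),
    Plan u γ R G l → ∀ t (ht : t < l.length),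
      (γ (l.get ⟨t, ht⟩).1 ≤ u (l.get ⟨t, ht⟩).1 (l.get ⟨t, ht⟩).2) ∧
      ∀ g ∈ G, (∀ s (hs : s < t), (l.get ⟨s, hs.trans ht⟩).2 ≠ g) →
        u (l.get ⟨t, ht⟩).1 g ≤ u (l.get ⟨t, ht⟩).1 (l.get ⟨t, ht⟩).2 := by
  intro l
  induction l with
  | nil => intro R G _ t ht; exact absurd ht (by simp)
  | cons ig rest ih =>
    intro R G h t ht
    match t with
    | 0 =>
      exact ⟨h.2.2.2.1, fun g hg _ => h.2.2.1 g hg⟩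
    | (t+1) =>
      have ht' : t < rest.length := by simpa using ht
      have spec := ih (R.erase ig.1) (G.erase ig.2) h.2.2.2.2 t ht'
      simp only [List.get_cons_succ]
      constructor
      · exact spec.1
      · intro g hgG hprev
        have hg' : g ∈ G.erase ig.2 := by
          refine Finset.mem_erase.mpr ⟨?_, hgG⟩
          have := hprev 0 (Nat.succ_pos t)
          simpa using fun e => this e.symm
        refine spec.2 g hg' ?_
        intro s hs
        have := hprev (s+1) (by omega)
        simpa using this


end Plan
end RRp

namespace RRp

/-- Build a round-robin allocation from an agent ordering `σ` and a forced plan `c`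
for the first `k` turns. -/
lemma rr_core {n m : ℕ} (hn : 0 < n) (hm : 0 < m) (u : Fin n → Fin m → ℝ)
    (σ : Fin n → Fin n) (hσ : Function.Bijective σ) (c : ℕ → Fin m) (k : ℕ)
    (hcinj : ∀ p q, p < k → q < k → c p = c q → p = q)
    (hcg : ∀ t, t < k → ∀ g : Fin m, (∀ s, s < t → c s ≠ g) →
      u (σ ⟨t % n, Nat.mod_lt _ hn⟩) g ≤ u (σ ⟨t % n, Nat.mod_lt _ hn⟩) (c t)) :
    ∃ pe : Fin m ≃ Fin m,
      (∀ t : Fin m, pe t = pk (fun t g => u (σ ⟨t % n, Nat.mod_lt _ hn⟩) g) c k hm t.val) ∧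
      IsRoundRobin hn u (fun g => σ ⟨(pe.symm g).val % n, Nat.mod_lt _ hn⟩) := by
  set v : ℕ → Fin m → ℝ := fun t g => u (σ ⟨t % n, Nat.mod_lt _ hn⟩) g with hvdef
  have hpinj : Function.Injective (fun t : Fin m => pk v c k hm t.val) := by
    intro a b he
    simp only at he
    rcases lt_trichotomy a.val b.val with h | h | h
    · exact absurd he (pk_inj v c k hm hcinj a.val b.val h b.isLt)
    · exact Fin.ext h
    · exact absurd he.symm (pk_inj v c k hm hcinj b.val a.val h a.isLt)
  have hpbij := Finite.injective_iff_bijective.mp hpinj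
  refine ⟨Equiv.ofBijective _ hpbij, fun t => rfl, σ, hσ, Equiv.ofBijective _ hpbij,
    (Equiv.ofBijective _ hpbij).bijective, fun t => ⟨?_, ?_⟩⟩
  · simp only [Equiv.symm_apply_apply]
  · intro g hg
    have hgm : g ∈ S v c k hm t.val := by
      rw [S_eq_pk v c k hm]
      simp only [Finset.mem_sdiff, Finset.mem_univ, true_and, Finset.mem_image,
        Finset.mem_range, not_exists]
      intro s hs
      exact hg ⟨s, hs.1.trans t.isLt⟩ (by simpa [Fin.lt_def] using hs.1) hs.2
    exact pk_greedy v c k hm hcinj hcg t.val t.isLt g hgm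

lemma exists_rr {n m : ℕ} (hn : 0 < n) (u : Fin n → Fin m → ℝ) :
    ∃ B : Fin m → Fin n, IsRoundRobin hn u B := by
  rcases Nat.eq_zero_or_pos m with hm0 | hm
  · subst hm0
    exact ⟨fun g => g.elim0, id, Function.bijective_id, id, Function.bijective_id,
      fun t => t.elim0⟩
  · obtain ⟨pe, -, hRR⟩ := rr_core hn hm u id Function.bijective_id (fun _ => ⟨0, hm⟩) 0
      (by omega) (by omega)
    exact ⟨_, hRR⟩

end RRp

/-- For every instance with `n` agents there is a round-robin allocation `B` with
`MEW ≤ (2n - 1) · EW(B)`; hence the egalitarian price of fairness of round-robin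
is at most `2n - 1`. -/
theorem roundRobin_egal_pof_upper (n m : ℕ) (hn : 0 < n)
    (u : Fin n → Fin m → ℝ)
    (hpos : ∀ i g, 0 ≤ u i g) (hnorm : ∀ i, ∑ g, u i g = 1) :
    ∃ B : Fin m → Fin n, IsRoundRobin hn u B ∧
      maxEgalWelfare u ≤ (2 * (n : ℝ) - 1) * egalWelfare u B := by
  classical
  open RRp in
  haveI : Nonempty (Fin n) := ⟨⟨0, hn⟩⟩
  haveI : Nonempty (Fin m → Fin n) := ⟨fun _ => ⟨0, hn⟩⟩
  have hne : (univ : Finset (Fin m → Fin n)).Nonempty := ⟨fun _ => ⟨0, hn⟩, mem_univ _⟩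
  obtain ⟨f₀, -, hf₀⟩ := Finset.exists_max_image univ (egalWelfare u) hne
  set X := egalWelfare u f₀ with hXdef
  have hMEW : maxEgalWelfare u ≤ X := ciSup_le fun f => hf₀ f (mem_univ f)
  have hegal_nonneg : ∀ B : Fin m → Fin n, 0 ≤ egalWelfare u B := by
    intro B
    exact le_ciInf fun i => Finset.sum_nonneg fun g _ => hpos i g
  have hn1 : (1:ℝ) ≤ (n:ℝ) := by exact_mod_cast hn
  have hcoef : (0:ℝ) < 2 * (n:ℝ) - 1 := by linarith
  by_cases hX : 0 < X
  case neg =>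
    obtain ⟨B, hRR⟩ := RRp.exists_rr hn u
    refine ⟨B, hRR, ?_⟩
    have h1 : (0:ℝ) ≤ (2 * (n:ℝ) - 1) * egalWelfare u B :=
      mul_nonneg (le_of_lt hcoef) (hegal_nonneg B)
    push_neg at hX
    linarith
  case pos =>
  -- main case
  have hXutil : ∀ i, X ≤ util u f₀ i := by
    intro i
    exact ciInf_le ((Set.finite_range _).bddBelow) i
  have hbne : ∀ i, (bundle f₀ i).Nonempty := by
    intro i
    rw [Finset.nonempty_iff_ne_empty]
    intro h
    have h0 : util u f₀ i = 0 := by rw [util, h]; simp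
    have := hXutil i
    rw [h0] at this
    linarith
  have hm : 0 < m := Fin.pos (hbne ⟨0, hn⟩).choose
  set gs : Fin n → Fin m := fun i => amax (u i) (bundle f₀ i) hm with hgsdef
  have hgsmem : ∀ i, gs i ∈ bundle f₀ i := fun i => amax_mem hm (hbne i)
  have hgsmax : ∀ i, ∀ g ∈ bundle f₀ i, u i g ≤ u i (gs i) := fun i => amax_max hm (hbne i)
  have hgsf₀ : ∀ i, f₀ (gs i) = i := by
    intro i
    have := hgsmem i
    rw [bundle, Finset.mem_filter] at this
    exact this.2
  have hgsinj : Function.Injective gs := by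
    intro i j he
    rw [← hgsf₀ i, ← hgsf₀ j, he]
  have hnm : n ≤ m := by
    have := Fintype.card_le_of_injective gs hgsinj
    simpa using this
  set γ : Fin n → ℝ := fun i => u i (gs i) with hγdef
  have hγnn : ∀ i, 0 ≤ γ i := fun i => hpos i (gs i)
  obtain ⟨L, hL⟩ := plan_exists u γ gs hgsinj (fun i => le_refl _) n univ univ
    (by simp) (fun i _ => mem_univ _)
  have hlen : L.length = n := by
    have := plan_length u γ L univ univ hL
    simpa using this
  set σ : Fin n → Fin n := fun p => (L.get ⟨p.val, by rw [hlen]; exact p.isLt⟩).1 with hσdef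
  have hσinj : Function.Injective σ := by
    intro p q he
    have hnd := plan_fst_nodup u γ L univ univ hL
    rw [List.nodup_iff_injective_get] at hnd
    have hlp : (p.val : ℕ) < (L.map Prod.fst).length := by simp [hlen]
    have hlq : (q.val : ℕ) < (L.map Prod.fst).length := by simp [hlen]
    have : (L.map Prod.fst).get ⟨p.val, hlp⟩ = (L.map Prod.fst).get ⟨q.val, hlq⟩ := by
      simp only [List.get_eq_getElem, List.getElem_map]
      exact he
    have := hnd this
    exact Fin.ext (by simpa using congrArg Fin.val this)
  have hσbij : Function.Bijective σ := Finite.injective_iff_bijective.mp hσinj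
  set c : ℕ → Fin m := fun t => if h : t < L.length then (L.get ⟨t, h⟩).2 else gs ⟨0, hn⟩
    with hcdef
  have hceq : ∀ t (h : t < L.length), c t = (L.get ⟨t, h⟩).2 := by
    intro t h
    rw [hcdef]
    simp only [dif_pos h]
  have hcinj : ∀ p q, p < n → q < n → c p = c q → p = q := by
    intro p q hp hq he
    have hnd := plan_snd_nodup u γ L univ univ hL
    rw [List.nodup_iff_injective_get] at hnd
    have hlp : p < (L.map Prod.snd).length := by simp [hlen]; omega
    have hlq : q < (L.map Prod.snd).length := by simp [hlen]; omega
    have hpl : p < L.length := by omega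
    have hql : q < L.length := by omega
    have h2 : (L.map Prod.snd).get ⟨p, hlp⟩ = (L.map Prod.snd).get ⟨q, hlq⟩ := by
      simp only [List.get_eq_getElem, List.getElem_map]
      rw [hceq p hpl, hceq q hql] at he
      exact he
    have := hnd h2
    simpa using congrArg Fin.val this
  have spec := plan_spec u γ L univ univ hL
  have hσget : ∀ (t : ℕ) (htL : t < L.length), σ ⟨t % n, Nat.mod_lt _ hn⟩
      = (L.get ⟨t, htL⟩).1 := by
    intro t htL
    have ht : t < n := by omega
    have he : (⟨t % n, Nat.mod_lt _ hn⟩ : Fin n) = ⟨t, ht⟩ := Fin.ext (Nat.mod_eq_of_lt ht)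
    rw [he]
  have hcg : ∀ t, t < n → ∀ g : Fin m, (∀ s, s < t → c s ≠ g) →
      u (σ ⟨t % n, Nat.mod_lt _ hn⟩) g ≤ u (σ ⟨t % n, Nat.mod_lt _ hn⟩) (c t) := by
    intro t ht g hprev
    have htL : t < L.length := by omega
    rw [hσget t htL, hceq t htL]
    refine (spec t htL).2 g (mem_univ g) ?_
    intro s hs
    have := hprev s hs
    rw [hceq s (by omega)] at this
    exact this
  obtain ⟨pe, hpe, hRR⟩ := RRp.rr_core hn hm u σ hσbij c n hcinj hcg
  set v : ℕ → Fin m → ℝ := fun t g => u (σ ⟨t % n, Nat.mod_lt _ hn⟩) g with hvdef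
  set P : ℕ → Fin m := fun t => pk v c n hm t with hPdef
  set B : Fin m → Fin n := fun g => σ ⟨(pe.symm g).val % n, Nat.mod_lt _ hn⟩ with hBdef
  refine ⟨B, hRR, ?_⟩
  have hpeP : ∀ t : Fin m, pe t = P t.val := hpe
  have hPinj : ∀ t t', t < t' → t' < m → P t ≠ P t' := pk_inj v c n hm hcinj
  have hPsurj : ∀ g : Fin m, P (pe.symm g).val = g := by
    intro g
    rw [← hpeP (pe.symm g), Equiv.apply_symm_apply]
  have hBP : ∀ t (h : t < m), B (P t) = σ ⟨t % n, Nat.mod_lt _ hn⟩ := by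
    intro t h
    have : pe.symm (P t) = ⟨t, h⟩ := by
      rw [show P t = pe ⟨t, h⟩ from (hpeP ⟨t, h⟩).symm, Equiv.symm_apply_apply]
    rw [hBdef]
    simp only [this]
  -- per-agent bound
  have key : ∀ i : Fin n, X ≤ (2 * (n:ℝ) - 1) * util u B i := by
    intro i
    obtain ⟨p, hp⟩ := hσbij.2 i
    have hpm : p.val < m := lt_of_lt_of_le p.isLt hnm
    set T : Finset ℕ := (range m).filter (fun t => t % n = p.val) with hTdef
    have hmemT : ∀ t, t ∈ T ↔ (t < m ∧ t % n = p.val) := by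
      intro t
      simp [hTdef]
    have hbundle : bundle B i = T.image (fun t => P t) := by
      ext g
      rw [bundle, Finset.mem_filter]
      simp only [Finset.mem_image, mem_univ, true_and]
      constructor
      · intro hBg
        refine ⟨(pe.symm g).val, ?_, hPsurj g⟩
        rw [hmemT]
        refine ⟨(pe.symm g).isLt, ?_⟩
        rw [hBdef] at hBg
        simp only at hBg
        rw [← hp] at hBg
        have := hσinj hBg
        simpa using congrArg Fin.val this
      · rintro ⟨t, ht, rfl⟩
        rw [hmemT] at ht
        rw [hBP t ht.1, ← hp]
        congr 1
        exact Fin.ext ht.2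
    have hPinjT : ∀ x ∈ T, ∀ y ∈ T, P x = P y → x = y := by
      intro x hx y hy he
      rw [hmemT] at hx hy
      rcases lt_trichotomy x y with h | h | h
      · exact absurd he (hPinj x y h hy.1)
      · exact h
      · exact absurd he.symm (hPinj y x h hx.1)
    have hutil : util u B i = ∑ t ∈ T, u i (P t) := by
      rw [util, hbundle, Finset.sum_image hPinjT]
    -- first-pick bound : γ i ≤ util u B i
    have hfirst : γ i ≤ util u B i := by
      have hpL : p.val < L.length := by omega
      have h1 : γ (σ p) ≤ u (σ p) (c p.val) := by
        rw [hceq p.val hpL]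
        exact (spec p.val hpL).1
      have h2 : P p.val = c p.val := by
        rw [hPdef]
        simp only [pk, if_pos p.isLt]
      have h3 : u (σ p) (P p.val) ≤ ∑ t ∈ T, u (σ p) (P t) := by
        refine Finset.single_le_sum (fun t _ => hpos (σ p) (P t)) ?_
        rw [hmemT]
        exact ⟨hpm, Nat.mod_eq_of_lt p.isLt⟩
      rw [hutil, ← hp]
      rw [h2] at h3
      exact le_trans h1 h3
    -- window bound : ∑_{t ∈ [p, m)} u i (P t) ≤ n * util u B i
    set τ : ℕ → ℕ := fun t => p.val + n * ((t - p.val) / n) with hτdef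
    have hτfacts : ∀ t, p.val ≤ t → t < m →
        τ t ≤ t ∧ t < τ t + n ∧ τ t % n = p.val ∧ τ t < m := by
      intro t h1 h2
      have hdm := Nat.div_add_mod (t - p.val) n
      have hmlt : (t - p.val) % n < n := Nat.mod_lt _ hn
      have hτeq : τ t = p.val + n * ((t - p.val) / n) := rfl
      obtain ⟨w, hw⟩ : ∃ w, w = n * ((t - p.val) / n) := ⟨_, rfl⟩
      have hτt : τ t = p.val + w := by rw [hτeq, ← hw]
      rw [← hw] at hdm
      have hle : τ t ≤ t := by omega
      refine ⟨hle, by omega, ?_, by omega⟩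
      rw [hτeq, Nat.add_mul_mod_self_left]
      exact Nat.mod_eq_of_lt p.isLt
    have hwindow : ∑ t ∈ Ico p.val m, u i (P t) ≤ (n:ℝ) * util u B i := by
      have step1 : ∑ t ∈ Ico p.val m, u i (P t) ≤ ∑ t ∈ Ico p.val m, u i (P (τ t)) := by
        refine Finset.sum_le_sum ?_
        intro t ht
        rw [Finset.mem_Ico] at ht
        obtain ⟨hle, hlt, hmod, hτm⟩ := hτfacts t ht.1 ht.2
        have hmem : P t ∈ S v c n hm (τ t) := by
          rw [S_eq_pk v c n hm]
          simp only [Finset.mem_sdiff, Finset.mem_univ, true_and, Finset.mem_image,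
            Finset.mem_range, not_exists]
          intro s hs
          exact hPinj s t (lt_of_lt_of_le hs.1 hle) ht.2 hs.2
        have h := pk_greedy v c n hm hcinj hcg (τ t) hτm (P t) hmem
        rw [hvdef] at h
        simp only at h
        have he : (⟨τ t % n, Nat.mod_lt _ hn⟩ : Fin n) = p := Fin.ext hmod
        rw [he, hp] at h
        exact h
      have step2 : ∑ t ∈ Ico p.val m, u i (P (τ t)) ≤ (n:ℝ) * ∑ t ∈ T, u i (P t) := by
        rw [Finset.sum_comp (fun b => u i (P b)) τ]
        have hcardb : ∀ b ∈ (Ico p.val m).image τ,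
            ((Ico p.val m).filter (fun a => τ a = b)).card ≤ n := by
          intro b _
          have hsub : (Ico p.val m).filter (fun a => τ a = b) ⊆ Ico b (b + n) := by
            intro t ht
            rw [Finset.mem_filter, Finset.mem_Ico] at ht
            obtain ⟨⟨h1, h2⟩, h3⟩ := ht
            obtain ⟨hle, hlt, -, -⟩ := hτfacts t h1 h2
            rw [Finset.mem_Ico]
            omega
          have := Finset.card_le_card hsub
          rw [Nat.card_Ico] at this
          omega
        have h1 : ∑ b ∈ (Ico p.val m).image τ,
            ((Ico p.val m).filter (fun a => τ a = b)).card • u i (P b)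
            ≤ ∑ b ∈ (Ico p.val m).image τ, (n:ℝ) * u i (P b) := by
          refine Finset.sum_le_sum ?_
          intro b hb
          rw [nsmul_eq_mul]
          exact mul_le_mul_of_nonneg_right (by exact_mod_cast hcardb b hb) (hpos i (P b))
        refine le_trans h1 ?_
        rw [← Finset.mul_sum]
        refine mul_le_mul_of_nonneg_left ?_ (by positivity)
        refine Finset.sum_le_sum_of_subset_of_nonneg ?_ (fun t _ _ => hpos i (P t))
        intro b hb
        obtain ⟨t, ht, rfl⟩ := Finset.mem_image.mp hb
        rw [Finset.mem_Ico] at ht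
        obtain ⟨hle, -, hmod, hτm⟩ := hτfacts t ht.1 ht.2
        rw [hmemT]
        exact ⟨hτm, hmod⟩
      rw [hutil]
      exact le_trans step1 step2
    -- stolen bound : X ≤ (n-1) γ i + ∑_{t ∈ [p, m)} u i (P t)
    have hstolen : X ≤ ((n:ℝ) - 1) * γ i + ∑ t ∈ Ico p.val m, u i (P t) := by
      set Q : Finset ℕ := (range m).filter (fun t => P t ∈ bundle f₀ i) with hQdef
      have hmemQ : ∀ t, t ∈ Q ↔ (t < m ∧ P t ∈ bundle f₀ i) := by
        intro t
        simp [hQdef]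
      have hQimg : Q.image (fun t => P t) = bundle f₀ i := by
        ext g
        simp only [Finset.mem_image]
        constructor
        · rintro ⟨t, ht, rfl⟩
          exact ((hmemQ t).mp ht).2
        · intro hg
          refine ⟨(pe.symm g).val, ?_, hPsurj g⟩
          rw [hmemQ, hPsurj g]
          exact ⟨(pe.symm g).isLt, hg⟩
      have hQinj : ∀ x ∈ Q, ∀ y ∈ Q, P x = P y → x = y := by
        intro x hx y hy he
        rw [hmemQ] at hx hy
        rcases lt_trichotomy x y with h | h | h
        · exact absurd he (hPinj x y h hy.1)
        · exact h
        · exact absurd he.symm (hPinj y x h hx.1)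
      have hQsum : ∑ t ∈ Q, u i (P t) = util u f₀ i := by
        rw [util, ← hQimg, Finset.sum_image hQinj]
      have hsplit := Finset.sum_filter_add_sum_filter_not Q (fun t => t < p.val)
        (fun t => u i (P t))
      have hsmall : ∑ t ∈ Q.filter (fun t => t < p.val), u i (P t) ≤ ((n:ℝ) - 1) * γ i := by
        have h1 : ∑ t ∈ Q.filter (fun t => t < p.val), u i (P t)
            ≤ (Q.filter (fun t => t < p.val)).card • γ i := by
          refine Finset.sum_le_card_nsmul _ _ _ ?_
          intro t ht
          rw [Finset.mem_filter, hmemQ] at ht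
          exact hgsmax i (P t) ht.1.2
        have h2 : (Q.filter (fun t => t < p.val)).card ≤ p.val := by
          have hsub : Q.filter (fun t => t < p.val) ⊆ range p.val := by
            intro t ht
            rw [Finset.mem_filter] at ht
            rw [Finset.mem_range]
            exact ht.2
          have := Finset.card_le_card hsub
          rwa [Finset.card_range] at this
        have h3 : ((Q.filter (fun t => t < p.val)).card : ℝ) ≤ (n:ℝ) - 1 := by
          have h4 : (Q.filter (fun t => t < p.val)).card ≤ n - 1 := by
            have := p.isLt
            omega
          have h5 : ((Q.filter (fun t => t < p.val)).card : ℝ) ≤ ((n - 1 : ℕ) : ℝ) := by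
            exact_mod_cast h4
          refine le_trans h5 ?_
          have : ((n - 1 : ℕ) : ℝ) = (n:ℝ) - 1 := by
            have : 1 ≤ n := hn
            push_cast [Nat.cast_sub this]
            ring
          rw [this]
        refine le_trans h1 ?_
        rw [nsmul_eq_mul]
        exact mul_le_mul_of_nonneg_right h3 (hγnn i)
      have hrest : ∑ t ∈ Q.filter (fun t => ¬ t < p.val), u i (P t)
          ≤ ∑ t ∈ Ico p.val m, u i (P t) := by
        refine Finset.sum_le_sum_of_subset_of_nonneg ?_ (fun t _ _ => hpos i (P t))
        intro t ht
        rw [Finset.mem_filter, hmemQ] at ht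
        rw [Finset.mem_Ico]
        omega
      have := hXutil i
      rw [← hQsum, ← hsplit] at this
      linarith
    -- combine
    have h4 : ((n:ℝ) - 1) * γ i ≤ ((n:ℝ) - 1) * util u B i :=
      mul_le_mul_of_nonneg_left hfirst (by linarith)
    linarith
  -- conclude
  have hegal : X / (2 * (n:ℝ) - 1) ≤ egalWelfare u B := by
    refine le_ciInf ?_
    intro i
    rw [div_le_iff₀ hcoef]
    rw [mul_comm]
    exact key i
  calc maxEgalWelfare u ≤ X := hMEW
    _ ≤ (2 * (n:ℝ) - 1) * egalWelfare u B := by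
        have := (div_le_iff₀ hcoef).mp hegal
        linarith
end

section
/- For every fair-division instance with n agents, there exists an allocation B that is envy-free up to one good (EF1) such that MEW ≤ (2n − 1)·EW(B). Consequently, the egalitarian price of fairness of EF1 over instances with n agents is at most 2n − 1. -/
open Finset

/-- Envy-freeness up to one good. -/
def EF1 {n m : ℕ} (u : Fin n → Fin m → ℝ) (f : Fin m → Fin n) : Prop :=
  ∀ i j : Fin n, ∃ G ⊆ bundle f j, G.card ≤ 1 ∧
    ∑ g ∈ bundle f j \ G, u i g ≤ util u f i

namespace PoFAux

variable {n m : ℕ}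

/-- Ordered list of agents: unmatched agents (complement of `S`) first, then `S`. -/
def lst (S : Finset (Fin n)) : List (Fin n) := (Sᶜ.sort (· ≤ ·)) ++ (S.sort (· ≤ ·))

lemma lst_length (S : Finset (Fin n)) : (lst S).length = n := by
  simp [lst, Finset.length_sort, Finset.card_compl]
  have := S.card_le_univ
  simp at this
  omega

lemma lst_nodup (S : Finset (Fin n)) : (lst S).Nodup := by
  refine List.Nodup.append (Finset.sort_nodup _ _) (Finset.sort_nodup _ _) ?_
  intro a ha hb
  rw [Finset.mem_sort] at ha hb
  simp at ha; exact ha hb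

/-- Position of an agent in the list. -/
def pos (S : Finset (Fin n)) (i : Fin n) : ℕ :=
  if i ∈ S then (Sᶜ.sort (· ≤ ·)).length + (S.sort (· ≤ ·)).idxOf i
  else (Sᶜ.sort (· ≤ ·)).idxOf i

lemma pos_lt (S : Finset (Fin n)) (i : Fin n) : pos S i < n := by
  have hl := lst_length S
  unfold pos
  unfold lst at hl
  simp only [List.length_append] at hl
  by_cases hi : i ∈ S
  · simp only [hi, if_true]
    have : (S.sort (· ≤ ·)).idxOf i < (S.sort (· ≤ ·)).length :=
      List.idxOf_lt_length_iff.2 (by rw [Finset.mem_sort]; exact hi)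
    omega
  · simp only [hi, if_false]
    have : (Sᶜ.sort (· ≤ ·)).idxOf i < (Sᶜ.sort (· ≤ ·)).length :=
      List.idxOf_lt_length_iff.2 (by rw [Finset.mem_sort]; simpa using hi)
    omega

lemma lst_get_pos (S : Finset (Fin n)) (i : Fin n) (h : pos S i < (lst S).length) :
    (lst S)[pos S i] = i := by
  unfold pos lst
  by_cases hi : i ∈ S
  · simp only [hi, if_true]
    have h1 : (S.sort (· ≤ ·)).idxOf i < (S.sort (· ≤ ·)).length :=
      List.idxOf_lt_length_iff.2 (by rw [Finset.mem_sort]; exact hi)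
    rw [List.getElem_append_right (by omega)]
    simp only [Nat.add_sub_cancel_left]
    exact List.getElem_idxOf h1
  · simp only [hi, if_false]
    have h1 : (Sᶜ.sort (· ≤ ·)).idxOf i < (Sᶜ.sort (· ≤ ·)).length :=
      List.idxOf_lt_length_iff.2 (by rw [Finset.mem_sort]; simpa using hi)
    rw [List.getElem_append_left h1]
    exact List.getElem_idxOf h1

lemma pos_unmatched_lt (S : Finset (Fin n)) (i : Fin n) (hi : i ∉ S) :
    pos S i < n - S.card := by
  unfold pos
  simp only [hi, if_false]
  have h1 : (Sᶜ.sort (· ≤ ·)).idxOf i < (Sᶜ.sort (· ≤ ·)).length :=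
    List.idxOf_lt_length_iff.2 (by rw [Finset.mem_sort]; simpa using hi)
  have h2 : (Sᶜ.sort (· ≤ ·)).length = n - S.card := by
    rw [Finset.length_sort, Finset.card_compl]; simp
  omega

lemma pos_lt_pos (S : Finset (Fin n)) {i j : Fin n} (hi : i ∉ S) (hj : j ∈ S) :
    pos S i < pos S j := by
  have h1 : (Sᶜ.sort (· ≤ ·)).idxOf i < (Sᶜ.sort (· ≤ ·)).length :=
    List.idxOf_lt_length_iff.2 (by rw [Finset.mem_sort]; simpa using hi)
  unfold pos
  simp only [hi, hj, if_true, if_false]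
  omega

/-- The agent picking at time `τ`. -/
def sq (S : Finset (Fin n)) (i0 : Fin n) (τ : ℕ) : Fin n := (lst S).getD (τ % n) i0

lemma sq_eq (S : Finset (Fin n)) (i0 : Fin n) (τ : ℕ) (hn : 0 < n) :
    sq S i0 τ = (lst S)[τ % n]'(by rw [lst_length]; exact Nat.mod_lt _ hn) := by
  unfold sq
  rw [List.getD_eq_getElem]

lemma sq_eq_iff (S : Finset (Fin n)) (i0 : Fin n) (τ : ℕ) (j : Fin n) (hn : 0 < n) :
    sq S i0 τ = j ↔ τ % n = pos S j := by
  rw [sq_eq S i0 τ hn]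
  constructor
  · intro hh
    have hp : pos S j < (lst S).length := by rw [lst_length]; exact pos_lt S j
    have := lst_get_pos S j hp
    have heq : (lst S)[τ % n]'(by rw [lst_length]; exact Nat.mod_lt _ hn)
        = (lst S)[pos S j]'hp := hh.trans this.symm
    exact (List.Nodup.getElem_inj_iff (lst_nodup S)).1 heq
  · intro hh
    have hp : pos S j < (lst S).length := by rw [lst_length]; exact pos_lt S j
    have := lst_get_pos S j hp
    simp only [hh]
    exact this

lemma sq_pos_add (S : Finset (Fin n)) (i0 : Fin n) (j : Fin n) (r : ℕ) (hn : 0 < n) :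
    sq S i0 (pos S j + n * r) = j := by
  rw [sq_eq_iff S i0 _ j hn]
  rw [Nat.add_mul_mod_self_left]
  exact Nat.mod_eq_of_lt (pos_lt S j)


section Picking

variable (u : Fin n → Fin m → ℝ) (S : Finset (Fin n)) (i0 : Fin n) (P : Finset (Fin m))

/-- Remaining goods at time `τ` of the greedy round-robin over pool `P`. -/
noncomputable def rem : ℕ → Finset (Fin m)
  | 0 => P
  | τ+1 => rem τ \ ((rem τ).toList.argmax (u (sq S i0 τ))).toFinset

/-- The good picked at time `τ` (if any). -/
noncomputable def pk (τ : ℕ) : Option (Fin m) :=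
  (rem u S i0 P τ).toList.argmax (u (sq S i0 τ))

lemma rem_zero : rem u S i0 P 0 = P := rfl

lemma rem_succ (τ : ℕ) : rem u S i0 P (τ+1) = rem u S i0 P τ \ (pk u S i0 P τ).toFinset := rfl

lemma rem_succ_subset (τ : ℕ) : rem u S i0 P (τ+1) ⊆ rem u S i0 P τ := by
  rw [rem_succ]; exact Finset.sdiff_subset

lemma rem_mono {τ τ' : ℕ} (h : τ ≤ τ') : rem u S i0 P τ' ⊆ rem u S i0 P τ := by
  induction τ' with
  | zero => simp_all
  | succ k ih =>
    rcases Nat.lt_or_ge τ (k+1) with hlt | hge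
    · exact (rem_succ_subset u S i0 P k).trans (ih (by omega))
    · have : τ = k + 1 := by omega
      subst this; exact subset_rfl

lemma rem_subset_P (τ : ℕ) : rem u S i0 P τ ⊆ P := rem_mono u S i0 P (Nat.zero_le τ)

lemma pk_mem {τ : ℕ} {g : Fin m} (h : pk u S i0 P τ = some g) : g ∈ rem u S i0 P τ := by
  have := List.argmax_mem h
  rwa [Finset.mem_toList] at this

lemma pk_greedy {τ : ℕ} {g g' : Fin m} (h : pk u S i0 P τ = some g)
    (h' : g' ∈ rem u S i0 P τ) : u (sq S i0 τ) g' ≤ u (sq S i0 τ) g := by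
  have := List.not_lt_of_mem_argmax (by rwa [Finset.mem_toList]) h
  exact le_of_not_gt this

lemma pk_isSome {τ : ℕ} (h : (rem u S i0 P τ).Nonempty) : ∃ g, pk u S i0 P τ = some g := by
  rcases Option.eq_none_or_eq_some (pk u S i0 P τ) with hh | hh
  · exfalso
    have := List.argmax_eq_none.1 hh
    rw [Finset.toList_eq_nil] at this
    rw [this] at h
    exact Finset.not_nonempty_empty h
  · exact hh

lemma not_mem_rem_succ {τ : ℕ} {g : Fin m} (h : pk u S i0 P τ = some g) :
    g ∉ rem u S i0 P (τ+1) := by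
  rw [rem_succ]
  simp [h]

lemma mem_rem_succ {τ : ℕ} {g : Fin m} (hg : g ∈ rem u S i0 P τ)
    (h : pk u S i0 P τ ≠ some g) : g ∈ rem u S i0 P (τ+1) := by
  rw [rem_succ]
  rcases Option.eq_none_or_eq_some (pk u S i0 P τ) with hh | ⟨g', hh⟩
  · simp [hh, hg]
  · simp only [hh, Finset.mem_sdiff, Option.toFinset_some, Finset.mem_singleton]
    exact ⟨hg, fun hgg => h (by rw [hh, hgg])⟩

lemma rem_card (τ : ℕ) : (rem u S i0 P τ).card ≤ P.card - τ := by
  induction τ with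
  | zero => rw [rem_zero]; simp
  | succ k ih =>
    rcases Finset.eq_empty_or_nonempty (rem u S i0 P k) with he | hne
    · have : rem u S i0 P (k+1) ⊆ (∅ : Finset (Fin m)) := by
        rw [← he]; exact rem_succ_subset u S i0 P k
      simp [Finset.subset_empty.1 this]
    · obtain ⟨g, hg⟩ := pk_isSome u S i0 P hne
      have hcard : (rem u S i0 P (k+1)).card < (rem u S i0 P k).card := by
        apply Finset.card_lt_card
        constructor
        · exact rem_succ_subset u S i0 P k
        · intro hsub
          exact not_mem_rem_succ u S i0 P hg (hsub (pk_mem u S i0 P hg))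
      have hk : 0 < (rem u S i0 P k).card := Finset.card_pos.2 hne
      omega

lemma rem_eventually_empty (τ : ℕ) (h : P.card ≤ τ) : rem u S i0 P τ = ∅ := by
  have := rem_card u S i0 P τ
  rw [Finset.card_eq_zero.symm] at *
  omega

lemma exists_pick_time {g : Fin m} (hg : g ∈ P) : ∃ τ, pk u S i0 P τ = some g := by
  by_contra hc
  push_neg at hc
  have hall : ∀ τ, g ∈ rem u S i0 P τ := by
    intro τ
    induction τ with
    | zero => exact hg
    | succ k ih => exact mem_rem_succ u S i0 P ih (hc k)
  have := hall P.card
  rw [rem_eventually_empty u S i0 P P.card le_rfl] at this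
  simp at this

lemma pick_time_unique {τ τ' : ℕ} {g : Fin m} (h : pk u S i0 P τ = some g)
    (h' : pk u S i0 P τ' = some g) : τ = τ' := by
  by_contra hne
  rcases Nat.lt_or_ge τ τ' with hlt | hge
  · exact not_mem_rem_succ u S i0 P h ((rem_mono u S i0 P hlt) (pk_mem u S i0 P h'))
  · have hlt : τ' < τ := by omega
    exact not_mem_rem_succ u S i0 P h' ((rem_mono u S i0 P hlt) (pk_mem u S i0 P h))

open Classical in
/-- The time at which good `g` is picked. -/
noncomputable def tm (g : Fin m) : ℕ :=
  if hg : ∃ τ, pk u S i0 P τ = some g then Nat.find hg else 0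

lemma tm_spec {g : Fin m} (hg : g ∈ P) : pk u S i0 P (tm u S i0 P g) = some g := by
  classical
  have hex := exists_pick_time u S i0 P hg
  unfold tm
  rw [dif_pos hex]
  exact Nat.find_spec hex

lemma tm_eq {τ : ℕ} {g : Fin m} (h : pk u S i0 P τ = some g) : tm u S i0 P g = τ := by
  have hg : g ∈ P := rem_subset_P u S i0 P τ (pk_mem u S i0 P h)
  exact pick_time_unique u S i0 P (tm_spec u S i0 P hg) h

/-- value of time `τ`'s pick in agent `i`'s eyes. -/
noncomputable def wv (i : Fin n) (τ : ℕ) : ℝ := ((pk u S i0 P τ).map (u i)).getD 0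

lemma wv_eq {i : Fin n} {τ : ℕ} {g : Fin m} (h : pk u S i0 P τ = some g) :
    wv u S i0 P i τ = u i g := by
  unfold wv; rw [h]; rfl

lemma wv_nonneg (hpos : ∀ i g, 0 ≤ u i g) (i : Fin n) (τ : ℕ) : 0 ≤ wv u S i0 P i τ := by
  unfold wv
  rcases Option.eq_none_or_eq_some (pk u S i0 P τ) with hh | ⟨g, hh⟩ <;> simp [hh]
  exact hpos i g

lemma wv_mono (hpos : ∀ i g, 0 ≤ u i g) {i : Fin n} {τ τ' : ℕ} (hs : sq S i0 τ = i)
    (hle : τ ≤ τ') : wv u S i0 P i τ' ≤ wv u S i0 P i τ := by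
  rcases Option.eq_none_or_eq_some (pk u S i0 P τ') with hh | ⟨g', hh⟩
  · unfold wv
    rw [hh]
    simp
    rcases Option.eq_none_or_eq_some (pk u S i0 P τ) with h2 | ⟨g, h2⟩ <;> simp [h2]
    exact hpos i g
  · have hg' : g' ∈ rem u S i0 P τ := rem_mono u S i0 P hle (pk_mem u S i0 P hh)
    obtain ⟨g, h2⟩ := pk_isSome u S i0 P ⟨g', hg'⟩
    rw [wv_eq u S i0 P hh, wv_eq u S i0 P h2]
    have := pk_greedy u S i0 P h2 hg'
    rwa [hs] at this

end Picking

section Alloc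

variable (u : Fin n → Fin m → ℝ) (S : Finset (Fin n)) (h : Fin n → Fin m) (i0 : Fin n)

/-- The pool of goods not assigned in the matching phase. -/
def Pool (S : Finset (Fin n)) (h : Fin n → Fin m) : Finset (Fin m) := univ \ S.image h

lemma mem_Pool {S : Finset (Fin n)} {h : Fin n → Fin m} {g : Fin m} :
    g ∈ Pool S h ↔ ¬ ∃ i ∈ S, h i = g := by
  simp [Pool]

open Classical in
/-- The final allocation: matched goods to their matched agents, pool goods by greedy
round robin (unmatched agents first). -/
noncomputable def alloc : Fin m → Fin n := fun g =>
  if hg : ∃ i, i ∈ S ∧ h i = g then hg.choose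
  else sq S i0 (tm u S i0 (Pool S h) g)

/-- Phase-2 bundle of agent `j`. -/
noncomputable def P2 (j : Fin n) : Finset (Fin m) :=
  (Pool S h).filter (fun g => sq S i0 (tm u S i0 (Pool S h) g) = j)

lemma alloc_matched (hinj : Set.InjOn h ↑S) {i : Fin n} (hi : i ∈ S) :
    alloc u S h i0 (h i) = i := by
  unfold alloc
  rw [dif_pos ⟨i, hi, rfl⟩]
  have hspec := (⟨i, hi, rfl⟩ : ∃ j, j ∈ S ∧ h j = h i).choose_spec
  exact hinj hspec.1 hi hspec.2

lemma alloc_mem_S {g : Fin m} (hg : ∃ i ∈ S, h i = g) : alloc u S h i0 g ∈ S := by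
  unfold alloc
  rw [dif_pos (by tauto)]
  exact (Exists.choose_spec (p := fun i => i ∈ S ∧ h i = g) (by tauto)).1

lemma alloc_pool {g : Fin m} (hg : g ∈ Pool S h) :
    alloc u S h i0 g = sq S i0 (tm u S i0 (Pool S h) g) := by
  unfold alloc
  rw [dif_neg]
  rw [mem_Pool] at hg
  tauto

lemma bundle_unmatched {j : Fin n} (hj : j ∉ S) :
    bundle (alloc u S h i0) j = P2 u S h i0 j := by
  ext g
  simp only [bundle, P2, Finset.mem_filter, Finset.mem_univ, true_and]
  by_cases hg : g ∈ Pool S h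
  · rw [alloc_pool u S h i0 hg]
    simp [hg]
  · simp only [hg, false_and, iff_false]
    rw [mem_Pool] at hg
    push_neg at hg
    intro hc
    rw [← hc] at hj
    exact hj (alloc_mem_S u S h i0 (by tauto))

lemma h_not_mem_Pool {j : Fin n} (hj : j ∈ S) : h j ∉ Pool S h := by
  simp only [mem_Pool, not_not]
  exact ⟨j, hj, rfl⟩

lemma bundle_matched (hinj : Set.InjOn h ↑S) {j : Fin n} (hj : j ∈ S) :
    bundle (alloc u S h i0) j = insert (h j) (P2 u S h i0 j) := by
  ext g
  simp only [bundle, P2, Finset.mem_filter, Finset.mem_univ, true_and, Finset.mem_insert]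
  by_cases hg : g ∈ Pool S h
  · rw [alloc_pool u S h i0 hg]
    have : g ≠ h j := by
      intro hc; rw [hc] at hg; exact h_not_mem_Pool S h hj hg
    simp [hg, this]
  · have hex : ∃ i ∈ S, h i = g := by
      rw [mem_Pool] at hg; exact not_not.mp hg
    obtain ⟨i, hi, hig⟩ := hex
    subst hig
    rw [alloc_matched u S h i0 hinj hi]
    simp only [hg, false_and, or_false]
    constructor
    · intro hc; subst hc; rfl
    · intro hc; exact hinj hi hj hc

end Alloc

section Charge

variable (u : Fin n → Fin m → ℝ) (S : Finset (Fin n)) (h : Fin n → Fin m) (i0 : Fin n)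

lemma picksum (g0 : Fin m) (hpos : ∀ i g, 0 ≤ u i g) (i : Fin n) (R : Finset ℕ) :
    ∑ r ∈ R, wv u S i0 (Pool S h) i (pos S i + n * r)
      ≤ ∑ g ∈ P2 u S h i0 i, u i g := by
  classical
  set P := Pool S h with hP
  set R1 := R.filter (fun r => (pk u S i0 P (pos S i + n * r)).isSome) with hR1
  have hsplit : ∑ r ∈ R, wv u S i0 P i (pos S i + n * r)
      = ∑ r ∈ R1, wv u S i0 P i (pos S i + n * r) := by
    rw [hR1, Finset.sum_filter_of_ne]
    intro r _ hne
    by_contra hc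
    rcases Option.eq_none_or_eq_some (pk u S i0 P (pos S i + n * r)) with hh | ⟨g, hh⟩
    · exact hne (by unfold wv; rw [hh]; rfl)
    · simp [hh] at hc
  rw [hsplit]
  set ψ : ℕ → Fin m := fun r => (pk u S i0 P (pos S i + n * r)).getD g0 with hψ
  have hpk : ∀ r ∈ R1, pk u S i0 P (pos S i + n * r) = some (ψ r) := by
    intro r hr
    rw [hR1, Finset.mem_filter] at hr
    obtain ⟨g, hg⟩ := Option.isSome_iff_exists.1 hr.2
    rw [hψ]; simp [hg]
  have hval : ∀ r ∈ R1, wv u S i0 P i (pos S i + n * r) = u i (ψ r) := by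
    intro r hr
    exact wv_eq u S i0 P (hpk r hr)
  rw [Finset.sum_congr rfl hval]
  have hinj : ∀ x ∈ R1, ∀ y ∈ R1, ψ x = ψ y → x = y := by
    intro x hx y hy hxy
    have h1 := hpk x hx
    have h2 := hpk y hy
    rw [hxy] at h1
    have heq := pick_time_unique u S i0 P h1 h2
    have h3 : n * x = n * y := by omega
    exact Nat.eq_of_mul_eq_mul_left i0.pos h3
  rw [← Finset.sum_image (f := fun g => u i g) hinj]
  apply Finset.sum_le_sum_of_subset_of_nonneg
  · intro g hg
    rw [Finset.mem_image] at hg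
    obtain ⟨r, hr, hrg⟩ := hg
    have h1 := hpk r hr
    rw [hrg] at h1
    have hmem : g ∈ P := rem_subset_P u S i0 P _ (pk_mem u S i0 P h1)
    have htm := tm_eq u S i0 P h1
    rw [P2, Finset.mem_filter]
    refine ⟨hmem, ?_⟩
    rw [← hP, htm]
    exact sq_pos_add S i0 i r i0.pos
  · intro g _ _
    exact hpos i g

lemma charge (g0 : Fin m) (hpos : ∀ i g, 0 ≤ u i g) (i : Fin n) (T : Finset (Fin m))
    (hT : T ⊆ Pool S h) (ρ : Fin m → ℕ)
    (hρ : ∀ g ∈ T, ∀ g' ∈ T, ρ g = ρ g' → g = g')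
    (hle : ∀ g ∈ T, pos S i + n * ρ g ≤ tm u S i0 (Pool S h) g) :
    ∑ g ∈ T, u i g ≤ ∑ g ∈ P2 u S h i0 i, u i g := by
  classical
  have step1 : ∑ g ∈ T, u i g
      ≤ ∑ g ∈ T, wv u S i0 (Pool S h) i (pos S i + n * ρ g) := by
    apply Finset.sum_le_sum
    intro g hg
    have h1 : pk u S i0 (Pool S h) (tm u S i0 (Pool S h) g) = some g :=
      tm_spec u S i0 (Pool S h) (hT hg)
    have h2 : u i g = wv u S i0 (Pool S h) i (tm u S i0 (Pool S h) g) :=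
      (wv_eq u S i0 (Pool S h) h1).symm
    rw [h2]
    exact wv_mono u S i0 (Pool S h) hpos (sq_pos_add S i0 i (ρ g) i0.pos) (hle g hg)
  refine step1.trans ?_
  have step2 : ∑ g ∈ T, wv u S i0 (Pool S h) i (pos S i + n * ρ g)
      = ∑ r ∈ T.image ρ, wv u S i0 (Pool S h) i (pos S i + n * r) := by
    rw [Finset.sum_image hρ]
  rw [step2]
  exact picksum u S h i0 g0 hpos i _

lemma util_eq_unmatched {j : Fin n} (hj : j ∉ S) :
    util u (alloc u S h i0) j = ∑ g ∈ P2 u S h i0 j, u j g := by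
  rw [util, bundle_unmatched u S h i0 hj]

lemma util_eq_matched (hinj : Set.InjOn h ↑S) {j : Fin n} (hj : j ∈ S) :
    util u (alloc u S h i0) j = u j (h j) + ∑ g ∈ P2 u S h i0 j, u j g := by
  rw [util, bundle_matched u S h i0 hinj hj, Finset.sum_insert]
  intro hc
  exact h_not_mem_Pool S h hj (Finset.filter_subset _ _ hc)

lemma P2_sum_le_util (hpos : ∀ i g, 0 ≤ u i g) (hinj : Set.InjOn h ↑S) (i : Fin n) :
    ∑ g ∈ P2 u S h i0 i, u i g ≤ util u (alloc u S h i0) i := by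
  by_cases hi : i ∈ S
  · rw [util_eq_matched u S h i0 hinj hi]
    have := hpos i (h i)
    linarith
  · rw [util_eq_unmatched u S h i0 hi]

lemma P2_tm_mod {j : Fin n} {g : Fin m} (hg : g ∈ P2 u S h i0 j) :
    tm u S i0 (Pool S h) g = n * (tm u S i0 (Pool S h) g / n) + pos S j := by
  rw [P2, Finset.mem_filter] at hg
  have hmod : tm u S i0 (Pool S h) g % n = pos S j :=
    (sq_eq_iff S i0 _ j i0.pos).1 hg.2
  conv_lhs => rw [← Nat.div_add_mod (tm u S i0 (Pool S h) g) n]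
  rw [hmod]

lemma P2_subset_Pool (j : Fin n) : P2 u S h i0 j ⊆ Pool S h := Finset.filter_subset _ _

lemma tm_inj {g g' : Fin m} (hg : g ∈ Pool S h) (hg' : g' ∈ Pool S h)
    (heq : tm u S i0 (Pool S h) g = tm u S i0 (Pool S h) g') : g = g' := by
  have h1 := tm_spec u S i0 (Pool S h) hg
  have h2 := tm_spec u S i0 (Pool S h) hg'
  rw [heq, h2] at h1
  exact (Option.some_inj.1 h1).symm

lemma nat_aux1 {X Y : ℕ} (h0 : X ≠ 0) (h0' : Y ≠ 0) (hr : X - 1 = Y - 1) : X = Y := by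
  omega

lemma nat_aux2 {p q N T X : ℕ} (hd : T = N * X + q) (h0 : X ≠ 0) (hp : p < N) :
    p + N * (X - 1) ≤ T := by
  have hmm : N * (X - 1) + N = N * X := by
    rw [← Nat.mul_succ]; congr 1; omega
  omega

lemma nat_aux3 {p q N T X : ℕ} (hd : T = N * X + q) (hpq : p ≤ q) : p + N * X ≤ T := by
  omega

lemma charge_shift (g0 : Fin m) (hpos : ∀ i g, 0 ≤ u i g) (i j : Fin n)
    (T : Finset (Fin m)) (hT : T ⊆ P2 u S h i0 j)
    (hne : ∀ g ∈ T, tm u S i0 (Pool S h) g ≠ pos S j) :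
    ∑ g ∈ T, u i g ≤ ∑ g ∈ P2 u S h i0 i, u i g := by
  apply charge u S h i0 g0 hpos i T (hT.trans (P2_subset_Pool u S h i0 j))
    (fun g => tm u S i0 (Pool S h) g / n - 1)
  · intro g hg g' hg' hρ
    have hd := P2_tm_mod u S h i0 (hT hg)
    have hd' := P2_tm_mod u S h i0 (hT hg')
    have hρ2 : tm u S i0 (Pool S h) g / n - 1 = tm u S i0 (Pool S h) g' / n - 1 := hρ
    have h0 : tm u S i0 (Pool S h) g / n ≠ 0 := by
      intro h0; rw [h0, Nat.mul_zero] at hd; exact hne g hg (by omega)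
    have h0' : tm u S i0 (Pool S h) g' / n ≠ 0 := by
      intro h0; rw [h0, Nat.mul_zero] at hd'; exact hne g' hg' (by omega)
    have hdd := nat_aux1 h0 h0' hρ2
    have : tm u S i0 (Pool S h) g = tm u S i0 (Pool S h) g' := by rw [hd, hd', hdd]
    exact tm_inj u S h i0 (P2_subset_Pool u S h i0 j (hT hg))
      (P2_subset_Pool u S h i0 j (hT hg')) this
  · intro g hg
    have hd := P2_tm_mod u S h i0 (hT hg)
    show pos S i + n * (tm u S i0 (Pool S h) g / n - 1) ≤ tm u S i0 (Pool S h) g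
    have h0 : tm u S i0 (Pool S h) g / n ≠ 0 := by
      intro h0; rw [h0, Nat.mul_zero] at hd; exact hne g hg (by omega)
    exact nat_aux2 hd h0 (pos_lt S i)

lemma charge_all (g0 : Fin m) (hpos : ∀ i g, 0 ≤ u i g) (i j : Fin n)
    (hij : pos S i ≤ pos S j) :
    ∑ g ∈ P2 u S h i0 j, u i g ≤ ∑ g ∈ P2 u S h i0 i, u i g := by
  apply charge u S h i0 g0 hpos i _ (P2_subset_Pool u S h i0 j)
    (fun g => tm u S i0 (Pool S h) g / n)
  · intro g hg g' hg' hρ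
    have hd := P2_tm_mod u S h i0 hg
    have hd' := P2_tm_mod u S h i0 hg'
    have : tm u S i0 (Pool S h) g = tm u S i0 (Pool S h) g' := by
      rw [hd, hd', hρ]
    exact tm_inj u S h i0 (P2_subset_Pool u S h i0 j hg)
      (P2_subset_Pool u S h i0 j hg') this
  · intro g hg
    have hd := P2_tm_mod u S h i0 hg
    show pos S i + n * (tm u S i0 (Pool S h) g / n) ≤ tm u S i0 (Pool S h) g
    exact nat_aux3 hd hij

lemma sum_card_le_one {s : Finset (Fin m)} {f : Fin m → ℝ} {c : ℝ} (hc : 0 ≤ c)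
    (hcard : s.card ≤ 1) (hf : ∀ x ∈ s, f x ≤ c) : ∑ x ∈ s, f x ≤ c := by
  rcases Finset.eq_empty_or_nonempty s with he | ⟨a, ha⟩
  · simp [he, hc]
  · have : s = {a} := by
      ext x
      simp only [Finset.mem_singleton]
      constructor
      · intro hx; exact Finset.card_le_one.1 hcard x hx a ha
      · intro hx; rwa [hx]
    rw [this, Finset.sum_singleton]
    exact hf a ha

theorem alloc_EF1 (hpos : ∀ i g, 0 ≤ u i g) (hinj : Set.InjOn h ↑S)
    (hdom : ∀ i ∈ S, ∀ g ∈ Pool S h, u i g ≤ u i (h i))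
    (hh0 : ∀ i ∈ S, 0 ≤ u i (h i)) :
    EF1 u (alloc u S h i0) := by
  classical
  intro i j
  by_cases hj : j ∈ S
  · -- matched target: remove the matched good h j
    refine ⟨{h j}, ?_, by simp, ?_⟩
    · rw [bundle_matched u S h i0 hinj hj]
      exact Finset.singleton_subset_iff.2 (Finset.mem_insert_self _ _)
    · have hnm : h j ∉ P2 u S h i0 j :=
        fun hc => h_not_mem_Pool S h hj (P2_subset_Pool u S h i0 j hc)
      have hbs : bundle (alloc u S h i0) j \ {h j} = P2 u S h i0 j := by
        rw [bundle_matched u S h i0 hinj hj]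
        ext g
        simp only [Finset.mem_sdiff, Finset.mem_insert, Finset.mem_singleton]
        constructor
        · rintro ⟨hg1 | hg1, hg2⟩
          · exact absurd hg1 hg2
          · exact hg1
        · intro hg
          exact ⟨Or.inr hg, fun hc => hnm (hc ▸ hg)⟩
      rw [hbs]
      by_cases hi : i ∈ S
      · rw [util_eq_matched u S h i0 hinj hi]
        have hsplit := Finset.sum_filter_add_sum_filter_not (P2 u S h i0 j)
          (fun g => tm u S i0 (Pool S h) g = pos S j) (fun g => u i g)
        rw [← hsplit]
        have hb1 : ∑ g ∈ (P2 u S h i0 j).filter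
            (fun g => tm u S i0 (Pool S h) g = pos S j), u i g ≤ u i (h i) := by
          apply sum_card_le_one (hh0 i hi)
          · rw [Finset.card_le_one]
            intro a ha b hb
            rw [Finset.mem_filter] at ha hb
            exact tm_inj u S h i0 (P2_subset_Pool u S h i0 j ha.1)
              (P2_subset_Pool u S h i0 j hb.1) (ha.2.trans hb.2.symm)
          · intro g hg
            rw [Finset.mem_filter] at hg
            exact hdom i hi g (P2_subset_Pool u S h i0 j hg.1)
        have hb2 : ∑ g ∈ (P2 u S h i0 j).filter
            (fun g => ¬ tm u S i0 (Pool S h) g = pos S j), u i g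
            ≤ ∑ g ∈ P2 u S h i0 i, u i g := by
          apply charge_shift u S h i0 (h j) hpos i j _ (Finset.filter_subset _ _)
          intro g hg
          exact (Finset.mem_filter.1 hg).2
        linarith
      · rw [util_eq_unmatched u S h i0 hi]
        exact charge_all u S h i0 (h j) hpos i j (le_of_lt (pos_lt_pos S hi hj))
  · -- unmatched target: remove the first pick
    refine ⟨(P2 u S h i0 j).filter (fun g => tm u S i0 (Pool S h) g = pos S j),
      ?_, ?_, ?_⟩
    · rw [bundle_unmatched u S h i0 hj]
      exact Finset.filter_subset _ _
    · rw [Finset.card_le_one]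
      intro a ha b hb
      rw [Finset.mem_filter] at ha hb
      exact tm_inj u S h i0 (P2_subset_Pool u S h i0 j ha.1)
        (P2_subset_Pool u S h i0 j hb.1) (ha.2.trans hb.2.symm)
    · rw [bundle_unmatched u S h i0 hj]
      have hT : P2 u S h i0 j \ (P2 u S h i0 j).filter
          (fun g => tm u S i0 (Pool S h) g = pos S j)
          = (P2 u S h i0 j).filter (fun g => ¬ tm u S i0 (Pool S h) g = pos S j) := by
        rw [Finset.sdiff_eq_filter]
        apply Finset.filter_congr
        intro g hg
        simp [Finset.mem_filter, hg]
      rw [hT]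
      refine le_trans ?_ (P2_sum_le_util u S h i0 hpos hinj i)
      apply charge_shift u S h i0 (h j) hpos i j _ (Finset.filter_subset _ _)
      intro g hg
      exact (Finset.mem_filter.1 hg).2

lemma nat_aux4 {p T N : ℕ} (hp : p ≤ T) : p + N * ((T - p) / N) ≤ T := by
  have h1 : (T - p) / N * N ≤ T - p := Nat.div_mul_le_self _ _
  have h2 : N * ((T - p) / N) = (T - p) / N * N := Nat.mul_comm _ _
  omega

lemma nat_aux5 {p T N r : ℕ} (hN : 0 < N) (hp : p ≤ T) (hr : (T - p) / N = r) :
    p + N * r ≤ T ∧ T < p + N * r + N := by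
  have h2 : N * ((T - p) / N) + (T - p) % N = T - p := Nat.div_add_mod _ _
  have h3 : (T - p) % N < N := Nat.mod_lt _ hN
  rw [hr] at h2
  omega

theorem welfare_unmatched (g0 : Fin m) (hpos : ∀ i g, 0 ≤ u i g) {i : Fin n}
    (hi : i ∉ S) (t : ℝ) (ht0 : 0 ≤ t)
    (hpool : ∀ g ∈ Pool S h, u i g ≤ t) :
    ∑ g ∈ Pool S h, u i g
      ≤ ((n - S.card - 1 : ℕ) : ℝ) * t + (n : ℝ) * ∑ g ∈ P2 u S h i0 i, u i g := by
  classical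
  have hn : 0 < n := i0.pos
  set P := Pool S h with hP
  set p := pos S i with hp
  have hsplit := Finset.sum_filter_add_sum_filter_not P
    (fun g => tm u S i0 P g < p) (fun g => u i g)
  rw [← hsplit]
  have bound1 : ∑ g ∈ P.filter (fun g => tm u S i0 P g < p), u i g
      ≤ ((n - S.card - 1 : ℕ) : ℝ) * t := by
    have hcard : (P.filter (fun g => tm u S i0 P g < p)).card ≤ p := by
      have := Finset.card_le_card_of_injOn (fun g => tm u S i0 P g)
        (s := P.filter (fun g => tm u S i0 P g < p)) (t := Finset.range p)
        (by intro g hg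
            rw [Finset.mem_coe, Finset.mem_filter] at hg
            exact Finset.mem_range.2 hg.2)
        (by intro g hg g' hg' heq
            rw [Finset.coe_filter, Set.mem_setOf_eq] at hg hg'
            exact tm_inj u S h i0 hg.1 hg'.1 heq)
      rwa [Finset.card_range] at this
    have hsum := Finset.sum_le_card_nsmul (P.filter (fun g => tm u S i0 P g < p))
      (fun g => u i g) t
      (fun g hg => hpool g (Finset.filter_subset _ _ hg))
    rw [nsmul_eq_mul] at hsum
    refine hsum.trans ?_
    apply mul_le_mul_of_nonneg_right _ ht0
    rw [Nat.cast_le]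
    have hplt : p < n - S.card := pos_unmatched_lt S i hi
    omega
  have bound2 : ∑ g ∈ P.filter (fun g => ¬ tm u S i0 P g < p), u i g
      ≤ (n : ℝ) * ∑ g ∈ P2 u S h i0 i, u i g := by
    set T := P.filter (fun g => ¬ tm u S i0 P g < p) with hT
    set ρ : Fin m → ℕ := fun g => (tm u S i0 P g - p) / n with hρ
    have hTp : ∀ g ∈ T, p ≤ tm u S i0 P g := by
      intro g hg
      rw [hT, Finset.mem_filter] at hg
      omega
    have step1 : ∑ g ∈ T, u i g ≤ ∑ g ∈ T, wv u S i0 P i (p + n * ρ g) := by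
      apply Finset.sum_le_sum
      intro g hg
      have hgP : g ∈ P := Finset.filter_subset _ _ hg
      have h1 : u i g = wv u S i0 P i (tm u S i0 P g) :=
        (wv_eq u S i0 P (tm_spec u S i0 P hgP)).symm
      rw [h1]
      exact wv_mono u S i0 P hpos (sq_pos_add S i0 i (ρ g) hn) (nat_aux4 (hTp g hg))
    have step2 : ∑ g ∈ T, wv u S i0 P i (p + n * ρ g)
        = ∑ r ∈ T.image ρ, (T.filter (fun g => ρ g = r)).card
            • wv u S i0 P i (p + n * r) :=
      Finset.sum_comp (fun r => wv u S i0 P i (p + n * r)) ρ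
    have step3 : ∀ r ∈ T.image ρ, (T.filter (fun g => ρ g = r)).card
        • wv u S i0 P i (p + n * r) ≤ (n : ℝ) * wv u S i0 P i (p + n * r) := by
      intro r _
      rw [nsmul_eq_mul]
      apply mul_le_mul_of_nonneg_right _ (wv_nonneg u S i0 P hpos i _)
      rw [Nat.cast_le]
      have := Finset.card_le_card_of_injOn (fun g => tm u S i0 P g)
        (s := T.filter (fun g => ρ g = r)) (t := Finset.Ico (p + n * r) (p + n * r + n))
        (by intro g hg
            show tm u S i0 P g ∈ Finset.Ico (p + n * r) (p + n * r + n)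
            rw [Finset.mem_coe, Finset.mem_filter] at hg
            have hb := nat_aux5 hn (hTp g hg.1) hg.2
            rw [Finset.mem_Ico]
            omega)
        (by intro g hg g' hg'
            rw [Finset.coe_filter, Set.mem_setOf_eq] at hg hg'
            exact tm_inj u S h i0 (Finset.filter_subset _ _ hg.1)
              (Finset.filter_subset _ _ hg'.1))
      rwa [Nat.card_Ico, Nat.add_sub_cancel_left] at this
    calc ∑ g ∈ T, u i g ≤ ∑ g ∈ T, wv u S i0 P i (p + n * ρ g) := step1
      _ = _ := step2
      _ ≤ ∑ r ∈ T.image ρ, (n : ℝ) * wv u S i0 P i (p + n * r) :=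
          Finset.sum_le_sum step3
      _ = (n : ℝ) * ∑ r ∈ T.image ρ, wv u S i0 P i (p + n * r) := by
          rw [Finset.mul_sum]
      _ ≤ (n : ℝ) * ∑ g ∈ P2 u S h i0 i, u i g := by
          apply mul_le_mul_of_nonneg_left _ (by positivity)
          exact picksum u S h i0 g0 hpos i _
  linarith

end Charge

section Matching

variable (u : Fin n → Fin m → ℝ) (A : Fin m → Fin n)

theorem exists_matching (t : ℝ) (ht0 : 0 ≤ t) (g0 : Fin m) :
    ∃ (S : Finset (Fin n)) (h : Fin n → Fin m),
      Set.InjOn h ↑S ∧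
      (∀ i ∈ S, t ≤ u i (h i)) ∧
      (∀ i ∈ S, ∀ g ∈ Pool S h, u i g ≤ u i (h i)) ∧
      (∀ i ∉ S, ∀ g ∈ Pool S h, u i g ≤ t) ∧
      (∀ i ∉ S, ∀ g : Fin m, A g = i → u i g ≤ t) := by
  classical
  set Good : Finset (Fin n) × (Fin n → Fin m) → Prop := fun Sh =>
    Set.InjOn Sh.2 ↑Sh.1 ∧ (∀ i ∈ Sh.1, t ≤ u i (Sh.2 i)) ∧
      (∀ j ∈ Sh.1, A (Sh.2 j) ∉ Sh.1 → u (A (Sh.2 j)) (Sh.2 j) ≤ t) with hGood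
  set Φ : Finset (Fin n) × (Fin n → Fin m) → ℝ := fun Sh =>
    ∑ i ∈ Sh.1, (1 + u i (Sh.2 i)) with hΦ
  have hne : Nonempty {x : Finset (Fin n) × (Fin n → Fin m) // Good x} := by
    refine ⟨⟨(∅, fun _ => g0), ?_, ?_, ?_⟩⟩
    · intro x hx; simp at hx
    · intro i hi; simp at hi
    · intro j hj; simp at hj
  obtain ⟨⟨⟨S, h⟩, hgood⟩, hmax⟩ :=
    Finite.exists_max (fun x : {x : Finset (Fin n) × (Fin n → Fin m) // Good x} => Φ x.val)
  obtain ⟨hinj, hval, hres⟩ := hgood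
  simp only at hinj hval hres
  -- adding move
  have add_move : ∀ i ∉ S, ∀ g ∈ Pool S h, t ≤ u i g →
      (A g ∈ insert i S ∨ u (A g) g ≤ t) → False := by
    intro i hi g hg htg hcond
    have hgim : ¬ ∃ j ∈ S, h j = g := mem_Pool.1 hg
    have hgood' : Good (insert i S, Function.update h i g) := by
      refine ⟨?_, ?_, ?_⟩
      · show Set.InjOn (Function.update h i g) ↑(insert i S)
        intro x hx y hy hxy
        simp only [Finset.coe_insert, Set.mem_insert_iff, Finset.mem_coe] at hx hy
        rcases hx with hx | hx <;> rcases hy with hy | hy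
        · rw [hx, hy]
        · exfalso
          rw [hx, Function.update_self,
            Function.update_of_ne (by rintro rfl; exact hi hy)] at hxy
          exact hgim ⟨y, hy, hxy.symm⟩
        · exfalso
          rw [hy, Function.update_self,
            Function.update_of_ne (by rintro rfl; exact hi hx)] at hxy
          exact hgim ⟨x, hx, hxy⟩
        · rw [Function.update_of_ne (by rintro rfl; exact hi hx),
            Function.update_of_ne (by rintro rfl; exact hi hy)] at hxy
          exact hinj hx hy hxy
      · show ∀ i' ∈ insert i S, t ≤ u i' (Function.update h i g i')
        intro i' hi'
        rcases Finset.mem_insert.1 hi' with hii | hmem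
        · rw [hii, Function.update_self]; exact htg
        · rw [Function.update_of_ne (by rintro rfl; exact hi hmem)]
          exact hval i' hmem
      · show ∀ j ∈ insert i S, A (Function.update h i g j) ∉ insert i S →
          u (A (Function.update h i g j)) (Function.update h i g j) ≤ t
        intro j hj hAj
        rcases Finset.mem_insert.1 hj with hjj | hmem
        · subst hjj
          rw [Function.update_self] at hAj ⊢
          rcases hcond with hc | hc
          · exact absurd hc hAj
          · exact hc
        · rw [Function.update_of_ne (by rintro rfl; exact hi hmem)] at hAj ⊢
          exact hres j hmem (fun hc => hAj (Finset.mem_insert_of_mem hc))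
    have hle := hmax ⟨(insert i S, Function.update h i g), hgood'⟩
    simp only [hΦ] at hle
    rw [Finset.sum_insert hi] at hle
    have heq : ∑ i' ∈ S, (1 + u i' (Function.update h i g i'))
        = ∑ i' ∈ S, (1 + u i' (h i')) := by
      apply Finset.sum_congr rfl
      intro i' hi'
      rw [Function.update_of_ne (by rintro rfl; exact hi hi')]
    rw [heq, Function.update_self] at hle
    linarith
  -- swapping move
  have swap_move : ∀ i ∈ S, ∀ g ∈ Pool S h, u i (h i) < u i g →
      (A g ∈ S ∨ u (A g) g ≤ t) → False := by
    intro i hi g hg hlt hcond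
    have hgim : ¬ ∃ j ∈ S, h j = g := mem_Pool.1 hg
    have hgood' : Good (S, Function.update h i g) := by
      refine ⟨?_, ?_, ?_⟩
      · show Set.InjOn (Function.update h i g) ↑S
        intro x hx y hy hxy
        simp only [Finset.mem_coe] at hx hy
        by_cases hxi : x = i <;> by_cases hyi : y = i
        · rw [hxi, hyi]
        · exfalso
          rw [hxi, Function.update_self, Function.update_of_ne hyi] at hxy
          exact hgim ⟨y, hy, hxy.symm⟩
        · exfalso
          rw [hyi, Function.update_self, Function.update_of_ne hxi] at hxy
          exact hgim ⟨x, hx, hxy⟩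
        · rw [Function.update_of_ne hxi, Function.update_of_ne hyi] at hxy
          exact hinj hx hy hxy
      · show ∀ i' ∈ S, t ≤ u i' (Function.update h i g i')
        intro i' hi'
        by_cases hii : i' = i
        · rw [hii, Function.update_self]
          exact (hval i hi).trans (le_of_lt hlt)
        · rw [Function.update_of_ne hii]; exact hval i' hi'
      · show ∀ j ∈ S, A (Function.update h i g j) ∉ S →
          u (A (Function.update h i g j)) (Function.update h i g j) ≤ t
        intro j hj hAj
        by_cases hji : j = i
        · subst hji
          rw [Function.update_self] at hAj ⊢
          rcases hcond with hc | hc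
          · exact absurd hc hAj
          · exact hc
        · rw [Function.update_of_ne hji] at hAj ⊢
          exact hres j hj hAj
    have hle := hmax ⟨(S, Function.update h i g), hgood'⟩
    simp only [hΦ] at hle
    rw [← Finset.add_sum_erase S (fun i' => (1 + u i' (h i'))) hi,
      ← Finset.add_sum_erase S (fun i' => (1 + u i' (Function.update h i g i'))) hi] at hle
    have heq : ∑ i' ∈ S.erase i, (1 + u i' (Function.update h i g i'))
        = ∑ i' ∈ S.erase i, (1 + u i' (h i')) := by
      apply Finset.sum_congr rfl
      intro i' hi'
      rw [Function.update_of_ne (Finset.ne_of_mem_erase hi')]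
    rw [heq, Function.update_self] at hle
    linarith
  -- P4
  have hP4 : ∀ i ∉ S, ∀ g ∈ Pool S h, u i g ≤ t := by
    intro i hi g hg
    by_contra hc
    push_neg at hc
    by_cases hA : A g ∉ S ∧ t < u (A g) g
    · exact add_move (A g) hA.1 g hg (le_of_lt hA.2)
        (Or.inl (Finset.mem_insert_self _ _))
    · apply add_move i hi g hg (le_of_lt hc)
      rcases not_and_or.1 hA with hA | hA
      · exact Or.inl (Finset.mem_insert_of_mem (not_not.1 hA))
      · exact Or.inr (le_of_not_gt hA)
  -- P3
  have hP3 : ∀ i ∈ S, ∀ g ∈ Pool S h, u i g ≤ u i (h i) := by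
    intro i hi g hg
    by_contra hc
    push_neg at hc
    by_cases hA : A g ∉ S ∧ t < u (A g) g
    · exact add_move (A g) hA.1 g hg (le_of_lt hA.2)
        (Or.inl (Finset.mem_insert_self _ _))
    · apply swap_move i hi g hg hc
      rcases not_and_or.1 hA with hA | hA
      · exact Or.inl (not_not.1 hA)
      · exact Or.inr (le_of_not_gt hA)
  -- P5
  have hP5 : ∀ i ∉ S, ∀ g : Fin m, A g = i → u i g ≤ t := by
    intro i hi g hAg
    by_cases hg : g ∈ Pool S h
    · exact hP4 i hi g hg
    · rw [mem_Pool, not_not] at hg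
      obtain ⟨j, hj, hjg⟩ := hg
      subst hjg
      have := hres j hj (by rw [hAg]; exact hi)
      rwa [hAg] at this
  exact ⟨S, h, hinj, hval, hP3, hP4, hP5⟩

end Matching

end PoFAux

/-- For every instance with `n` agents there is an EF1 allocation `B` with
`MEW ≤ (2n - 1) · EW(B)`; hence the egalitarian price of fairness of EF1 is at
most `2n - 1`. -/
theorem ef1_egal_pof_upper (n m : ℕ) (hn : 0 < n)
    (u : Fin n → Fin m → ℝ)
    (hpos : ∀ i g, 0 ≤ u i g) (hnorm : ∀ i, ∑ g, u i g = 1) :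
    ∃ B : Fin m → Fin n, EF1 u B ∧
      maxEgalWelfare u ≤ (2 * (n : ℝ) - 1) * egalWelfare u B := by
  classical
  have i0 : Fin n := ⟨0, hn⟩
  have hm : 0 < m := by
    rcases Nat.eq_zero_or_pos m with h0 | h0
    · exfalso
      have := hnorm i0
      subst h0
      simp at this
    · exact h0
  have g0 : Fin m := ⟨0, hm⟩
  haveI : Nonempty (Fin n) := ⟨i0⟩
  haveI : Nonempty (Fin m → Fin n) := ⟨fun _ => i0⟩
  obtain ⟨A, hA⟩ := Finite.exists_max (fun f : Fin m → Fin n => egalWelfare u f)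
  set μ := egalWelfare u A with hμ
  have hMEW : maxEgalWelfare u ≤ μ := ciSup_le hA
  have hμA : ∀ i, μ ≤ util u A i := by
    intro i
    rw [hμ, egalWelfare]
    exact ciInf_le (Finite.bddBelow_range _) i
  have hμ0 : 0 ≤ μ := by
    rw [hμ, egalWelfare]
    exact le_ciInf (fun i => Finset.sum_nonneg fun g _ => hpos i g)
  have hden : (0:ℝ) < 2 * (n:ℝ) - 1 := by
    have : (1:ℝ) ≤ (n:ℝ) := by exact_mod_cast hn
    linarith
  set t := μ / (2 * (n:ℝ) - 1) with ht
  have ht0 : 0 ≤ t := div_nonneg hμ0 (le_of_lt hden)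
  have hμt : μ = (2 * (n:ℝ) - 1) * t := by
    rw [ht, mul_div_cancel₀ _ (ne_of_gt hden)]
  obtain ⟨S, h, hinj, hval, hP3, hP4, hP5⟩ := PoFAux.exists_matching u A t ht0 g0
  refine ⟨PoFAux.alloc u S h i0,
    PoFAux.alloc_EF1 u S h i0 hpos hinj hP3 (fun i hi => ht0.trans (hval i hi)), ?_⟩
  have hutil : ∀ i, t ≤ util u (PoFAux.alloc u S h i0) i := by
    intro i
    by_cases hi : i ∈ S
    · rw [PoFAux.util_eq_matched u S h i0 hinj hi]
      have h2 : 0 ≤ ∑ g ∈ PoFAux.P2 u S h i0 i, u i g :=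
        Finset.sum_nonneg fun g _ => hpos i g
      have := hval i hi
      linarith
    · -- unmatched agent
      set V := ∑ g ∈ PoFAux.P2 u S h i0 i, u i g with hV
      have hw := PoFAux.welfare_unmatched u S h i0 g0 hpos hi t ht0
        (fun g hg => hP4 i hi g hg)
      -- lower bound on the pool value
      have key : μ - (S.card : ℝ) * t ≤ ∑ g ∈ PoFAux.Pool S h, u i g := by
        have hsplit := Finset.sum_inter_add_sum_sdiff (bundle A i) (PoFAux.Pool S h)
          (fun g => u i g)
        have h1 : ∑ g ∈ bundle A i \ PoFAux.Pool S h, u i g ≤ (S.card : ℝ) * t := by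
          have hb := Finset.sum_le_card_nsmul (bundle A i \ PoFAux.Pool S h)
            (fun g => u i g) t
            (by intro g hg
                rw [Finset.mem_sdiff, bundle, Finset.mem_filter] at hg
                exact hP5 i hi g hg.1.2)
          rw [nsmul_eq_mul] at hb
          refine hb.trans (mul_le_mul_of_nonneg_right ?_ ht0)
          rw [Nat.cast_le]
          calc (bundle A i \ PoFAux.Pool S h).card
              ≤ (S.image h).card := by
                apply Finset.card_le_card
                intro g hg
                rw [Finset.mem_sdiff] at hg
                have := hg.2
                rw [PoFAux.mem_Pool, not_not] at this
                obtain ⟨j, hj, hjg⟩ := this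
                exact Finset.mem_image.2 ⟨j, hj, hjg⟩
            _ ≤ S.card := Finset.card_image_le
        have h2 : ∑ g ∈ bundle A i ∩ PoFAux.Pool S h, u i g
            ≤ ∑ g ∈ PoFAux.Pool S h, u i g :=
          Finset.sum_le_sum_of_subset_of_nonneg Finset.inter_subset_right
            (fun g _ _ => hpos i g)
        have h3 := hμA i
        rw [util] at h3
        linarith
      -- cast of n - S.card - 1
      have hklt : S.card < n := by
        have hSne : S ≠ Finset.univ := fun hSu => hi (hSu ▸ Finset.mem_univ i)
        have := Finset.card_lt_card (Finset.ssubset_univ_iff.2 hSne)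
        simpa using this
      have hcast : ((n - S.card - 1 : ℕ) : ℝ) = (n:ℝ) - (S.card : ℝ) - 1 := by
        rw [Nat.cast_sub (by omega : 1 ≤ n - S.card), Nat.cast_sub (by omega : S.card ≤ n)]
        norm_num
      rw [PoFAux.util_eq_unmatched u S h i0 hi, ← hV]
      rw [hcast] at hw
      -- combine: μ = (2n-1)t, μ - Kt ≤ (n-K-1)t + nV  ⇒  nt ≤ nV
      have hnv : (n:ℝ) * t ≤ (n:ℝ) * V := by nlinarith [key, hw, hμt]
      have hn' : (0:ℝ) < (n:ℝ) := by exact_mod_cast hn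
      exact (mul_le_mul_iff_of_pos_left hn').1 hnv
  have hEW : t ≤ egalWelfare u (PoFAux.alloc u S h i0) := by
    rw [egalWelfare]
    exact le_ciInf hutil
  calc maxEgalWelfare u ≤ μ := hMEW
    _ = (2 * (n:ℝ) - 1) * t := hμt
    _ ≤ (2 * (n:ℝ) - 1) * egalWelfare u (PoFAux.alloc u S h i0) :=
        mul_le_mul_of_nonneg_left hEW (le_of_lt hden)
end

section
/- For every integer n ≥ 2 and every real M > 0, there exists a fair-division instance with n agents (with nonnegative, additive, normalized utilities) such that MEW > M·EW(B) for every allocation B that maximizes utilitarian welfare, and MEW > 0. Consequently, the egalitarian price of fairness of maximum utilitarian welfare is infinite for every n ≥ 2. -/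
/-!
Agent `0` values two contested goods at `1/2` each and agent `1` values them at `(1 - δ)/2` each,
putting its remaining weight `δ` on a good of its own; every other agent cares only about a good of
its own. Maximizing utilitarian welfare gives every good to an agent valuing it most, so agent `0`
gets both contested goods and agent `1` is left with `δ`, whereas giving one contested good to each
of agents `0` and `1` leaves everybody with at least `1/4`. Letting `δ → 0` makes the ratio unbounded.
-/

open Finset

/-- A maximum-utilitarian-welfare allocation maximizes the sum of utilities. -/
def IsMUW {n m : ℕ} (u : Fin n → Fin m → ℝ) (f : Fin m → Fin n) : Prop :=
  ∀ g : Fin m → Fin n, ∑ i, util u g i ≤ ∑ i, util u f i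

section Welfare

variable {n m : ℕ} (u : Fin n → Fin m → ℝ)

theorem sum_util_eq_sum_apply (f : Fin m → Fin n) :
    ∑ i, util u f i = ∑ g, u (f g) g := by
  simp only [util, bundle]
  rw [← Finset.sum_fiberwise_of_maps_to (fun g _ => Finset.mem_univ (f g))]
  exact Finset.sum_congr rfl fun i _ => Finset.sum_congr rfl fun g hg => by
    rw [(Finset.mem_filter.mp hg).2]

theorem le_util_of_apply_eq {f : Fin m → Fin n} {i : Fin n} (hu : ∀ g, 0 ≤ u i g)
    {g : Fin m} (hg : f g = i) : u i g ≤ util u f i :=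
  Finset.single_le_sum (fun g _ => hu g) (by simp [bundle, hg])

theorem util_le_of_forall_apply_eq {f : Fin m → Fin n} {i : Fin n} (hu : ∀ g, 0 ≤ u i g)
    {g₀ : Fin m} (h : ∀ g, f g = i → g = g₀) : util u f i ≤ u i g₀ := by
  have hsub : bundle f i ⊆ {g₀} := fun g hg =>
    Finset.mem_singleton.mpr (h g (Finset.mem_filter.mp hg).2)
  simpa [util] using Finset.sum_le_sum_of_subset_of_nonneg hsub fun g _ _ => hu g

theorem egalWelfare_le_util (f : Fin m → Fin n) (i : Fin n) : egalWelfare u f ≤ util u f i :=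
  ciInf_le (Set.finite_range _).bddBelow i

theorem le_egalWelfare [NeZero n] {f : Fin m → Fin n} {c : ℝ} (h : ∀ i, c ≤ util u f i) :
    c ≤ egalWelfare u f :=
  le_ciInf h

theorem egalWelfare_nonneg [NeZero n] (hu : ∀ i g, 0 ≤ u i g) (f : Fin m → Fin n) :
    0 ≤ egalWelfare u f :=
  le_egalWelfare u fun i => Finset.sum_nonneg fun g _ => hu i g

theorem egalWelfare_le_maxEgalWelfare (f : Fin m → Fin n) : egalWelfare u f ≤ maxEgalWelfare u :=
  le_ciSup (Set.finite_range _).bddAbove f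

variable {u}

theorem IsMUW.apply_le {B : Fin m → Fin n} (hB : IsMUW u B) (g : Fin m) (j : Fin n) :
    u j g ≤ u (B g) g := by
  have h := hB (Function.update B g j)
  simp only [sum_util_eq_sum_apply, Function.apply_update (fun g' a => u a g'),
    Finset.sum_update_of_mem (Finset.mem_univ g)] at h
  rw [Finset.sum_eq_add_sum_sdiff_singleton_of_mem (Finset.mem_univ g)] at h
  linarith

theorem IsMUW.apply_ne_of_lt {B : Fin m → Fin n} (hB : IsMUW u B) {g : Fin m} {i j : Fin n}
    (h : u i g < u j g) : B g ≠ i := by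
  rintro rfl
  exact (hB.apply_le g j).not_gt h

end Welfare

section Instance

variable {k : ℕ}

noncomputable def ownWeight (δ : ℝ) (i : Fin (k + 2)) : ℝ :=
  if i = 0 then 0 else if i = 1 then δ else 1

theorem ownWeight_zero (δ : ℝ) : ownWeight δ (0 : Fin (k + 2)) = 0 := if_pos rfl

theorem ownWeight_one (δ : ℝ) : ownWeight δ (1 : Fin (k + 2)) = δ := by simp [ownWeight]

theorem ownWeight_of_ne {δ : ℝ} {i : Fin (k + 2)} (h₀ : i ≠ 0) (h₁ : i ≠ 1) :
    ownWeight δ i = 1 := by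
  simp [ownWeight, h₀, h₁]

/-- Agent `i` puts weight `ownWeight δ i` on its own good `i.succ` and splits the rest equally
between the two contested goods `0` and `(0 : Fin (k + 2)).succ`, the latter being agent `0`'s
own good. -/
noncomputable def pofUtility (δ : ℝ) (i : Fin (k + 2)) : Fin (k + 3) → ℝ :=
  Fin.cases ((1 - ownWeight δ i) / 2) fun j =>
    (if j = 0 then (1 - ownWeight δ i) / 2 else 0) + (if j = i then ownWeight δ i else 0)

theorem pofUtility_zero (δ : ℝ) (i : Fin (k + 2)) :
    pofUtility δ i 0 = (1 - ownWeight δ i) / 2 :=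
  rfl

theorem pofUtility_succ (δ : ℝ) (i j : Fin (k + 2)) :
    pofUtility δ i j.succ =
      (if j = 0 then (1 - ownWeight δ i) / 2 else 0) + (if j = i then ownWeight δ i else 0) :=
  rfl

theorem sum_pofUtility (δ : ℝ) (i : Fin (k + 2)) : ∑ g, pofUtility δ i g = 1 := by
  simp only [Fin.sum_univ_succ, pofUtility_zero, pofUtility_succ, Finset.sum_add_distrib,
    Finset.sum_ite_eq', Finset.mem_univ, if_true]
  ring

theorem pofUtility_nonneg {δ : ℝ} (hδ₀ : 0 ≤ δ) (hδ₁ : δ ≤ 1) (i : Fin (k + 2))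
    (g : Fin (k + 3)) : 0 ≤ pofUtility δ i g := by
  have : 0 ≤ ownWeight δ i ∧ ownWeight δ i ≤ 1 := by
    unfold ownWeight; split_ifs <;> constructor <;> linarith
  cases g using Fin.cases with
  | zero => rw [pofUtility_zero]; linarith
  | succ j => rw [pofUtility_succ]; split_ifs <;> linarith

def fairAlloc : Fin (k + 3) → Fin (k + 2) := Fin.cases 1 id

theorem quarter_le_util_fairAlloc {δ : ℝ} (hδ₀ : 0 ≤ δ) (hδ : δ ≤ 1 / 2) (i : Fin (k + 2)) :
    1 / 4 ≤ util (pofUtility δ) fairAlloc i := by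
  have hu : ∀ g, 0 ≤ pofUtility δ i g := pofUtility_nonneg hδ₀ (by linarith) i
  by_cases hi₁ : i = 1
  · subst hi₁
    refine le_trans ?_ (le_util_of_apply_eq _ hu (g := 0) rfl)
    rw [pofUtility_zero, ownWeight_one]
    linarith
  · refine le_trans ?_ (le_util_of_apply_eq _ hu (g := i.succ) rfl)
    rw [pofUtility_succ]
    by_cases hi₀ : i = 0
    · subst hi₀
      norm_num [ownWeight_zero]
    · norm_num [ownWeight_of_ne hi₀ hi₁, hi₀]

theorem exists_pofUtility_one_lt {δ : ℝ} (hδ : 0 < δ) {g : Fin (k + 3)}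
    (hg : g ≠ (1 : Fin (k + 2)).succ) : ∃ j, pofUtility δ 1 g < pofUtility δ j g := by
  cases g using Fin.cases with
  | zero =>
    refine ⟨0, ?_⟩
    rw [pofUtility_zero, pofUtility_zero, ownWeight_one, ownWeight_zero]
    linarith
  | succ i =>
    by_cases hi₀ : i = 0
    · subst hi₀
      refine ⟨0, ?_⟩
      simp only [pofUtility_succ, ownWeight_one, ownWeight_zero, if_true, zero_ne_one, if_false]
      linarith
    · have hi₁ : i ≠ 1 := fun h => hg (h ▸ rfl)
      refine ⟨i, ?_⟩
      simp [pofUtility_succ, ownWeight_of_ne hi₀ hi₁, hi₀, hi₁]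

theorem util_one_le_of_isMUW {δ : ℝ} (hδ₀ : 0 < δ) (hδ₁ : δ ≤ 1) {B : Fin (k + 3) → Fin (k + 2)}
    (hB : IsMUW (pofUtility δ) B) : util (pofUtility δ) B 1 ≤ δ := by
  have hle := util_le_of_forall_apply_eq (pofUtility δ) (pofUtility_nonneg hδ₀.le hδ₁ 1)
    (g₀ := (1 : Fin (k + 2)).succ) (f := B) fun g hg => by
      by_contra hne
      obtain ⟨j, hj⟩ := exists_pofUtility_one_lt hδ₀ hne
      exact hB.apply_ne_of_lt hj hg
  rwa [pofUtility_succ, if_neg one_ne_zero, if_pos rfl, ownWeight_one, zero_add] at hle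

end Instance

theorem muw_egal_pof_infinite_general (n : ℕ) (hn : 2 ≤ n) (M : ℝ) :
    ∃ (m : ℕ) (u : Fin n → Fin m → ℝ),
      (∀ i g, 0 ≤ u i g) ∧ (∀ i, ∑ g, u i g = 1) ∧
      0 < maxEgalWelfare u ∧
      ∀ B : Fin m → Fin n, IsMUW u B →
        M * egalWelfare u B < maxEgalWelfare u := by
  obtain ⟨k, rfl⟩ : ∃ k, n = k + 2 := ⟨n - 2, by omega⟩
  set δ : ℝ := 1 / (4 * |M| + 2)
  have hδ₀ : 0 < δ := by positivity
  have hδ_half : δ ≤ 1 / 2 := div_le_div_of_nonneg_left zero_le_one two_pos (by linarith [abs_nonneg M])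
  have hMδ : |M| * δ < 1 / 4 := by
    rw [mul_one_div, div_lt_div_iff₀ (by positivity) four_pos]
    linarith
  have hu₀ : ∀ (i : Fin (k + 2)) g, 0 ≤ pofUtility δ i g := pofUtility_nonneg hδ₀.le (by linarith)
  have hMEW : 1 / 4 ≤ maxEgalWelfare (pofUtility (k := k) δ) :=
    (le_egalWelfare _ (quarter_le_util_fairAlloc hδ₀.le hδ_half)).trans
      (egalWelfare_le_maxEgalWelfare _ _)
  refine ⟨k + 3, pofUtility δ, hu₀, sum_pofUtility δ, by linarith, fun B hB => ?_⟩
  have hEW₀ := egalWelfare_nonneg _ hu₀ B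
  have hEW : egalWelfare (pofUtility δ) B ≤ δ :=
    (egalWelfare_le_util _ B 1).trans (util_one_le_of_isMUW hδ₀ (by linarith) hB)
  calc M * egalWelfare (pofUtility δ) B ≤ |M| * δ :=
        mul_le_mul (le_abs_self M) hEW hEW₀ (abs_nonneg M)
    _ < 1 / 4 := hMδ
    _ ≤ maxEgalWelfare (pofUtility δ) := hMEW

/-- For every `n ≥ 2` and `M > 0` there is an instance with `n` agents
(nonnegative, additive, normalized utilities) with `MEW > 0` and
`MEW > M · EW(B)` for every utilitarian-welfare-maximizing allocation `B`;
hence the egalitarian price of fairness of MUW is infinite. -/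
theorem muw_egal_pof_infinite (n : ℕ) (hn : 2 ≤ n) (M : ℝ) (hM : 0 < M) :
    ∃ (m : ℕ) (u : Fin n → Fin m → ℝ),
      (∀ i g, 0 ≤ u i g) ∧ (∀ i, ∑ g, u i g = 1) ∧
      0 < maxEgalWelfare u ∧
      ∀ B : Fin m → Fin n, IsMUW u B →
        M * egalWelfare u B < maxEgalWelfare u :=
  muw_egal_pof_infinite_general n hn M
end

section
/- Let x > 1 and y be real numbers with 1/(x + √x) < y < 1/x². Consider the instance with 2 agents and 3 goods where u_1(1) = xy, u_1(2) = 1 − xy, u_1(3) = 0, and u_2(1) = 1 − xy, u_2(2) = (x − 1)y, u_2(3) = y. Then: (i) this is a valid instance (all utilities are nonnegative and each agent's utilities sum to 1); (ii) the maximum egalitarian welfare of the instance equals xy, attained by giving good 1 to agent 1 and goods 2 and 3 to agent 2; and (iii) every Nash-welfare-maximizing allocation gives goods 1 and 2 to agent 1 and good 3 to agent 2, and hence has egalitarian welfare y. In particular the ratio MEW / (maximum egalitarian welfare among MNW allocations) equals x. -/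
open Finset

/-- A maximum-Nash-welfare allocation maximizes the product of utilities. -/
def IsMNW {n m : ℕ} (u : Fin n → Fin m → ℝ) (f : Fin m → Fin n) : Prop :=
  ∀ g : Fin m → Fin n, ∏ i, util u g i ≤ ∏ i, util u f i

lemma util3 {n : ℕ} (u : Fin n → Fin 3 → ℝ) (f : Fin 3 → Fin n) (i : Fin n) :
    util u f i = (if f 0 = i then u i 0 else 0) + (if f 1 = i then u i 1 else 0)
      + (if f 2 = i then u i 2 else 0) := by
  rw [util, bundle, Finset.sum_filter, Fin.sum_univ_three]

set_option maxHeartbeats 2000000 in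
/-- For `x > 1` and `1/(x + √x) < y < 1/x²`, the 2-agent, 3-good instance with
`u₁ = (xy, 1 - xy, 0)` and `u₂ = (1 - xy, (x-1)y, y)` is a valid instance,
its maximum egalitarian welfare equals `xy` (attained by giving good 1 to
agent 1 and goods 2, 3 to agent 2), and every Nash-welfare-maximizing
allocation gives goods 1, 2 to agent 1 and good 3 to agent 2, and hence has
egalitarian welfare `y`; in particular the ratio of `MEW` to the best
egalitarian welfare among MNW allocations equals `x`. -/
theorem mnw_two_agent_instance (x y : ℝ) (hx : 1 < x)
    (hy1 : 1 / (x + Real.sqrt x) < y) (hy2 : y < 1 / x ^ 2) :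
    let u : Fin 2 → Fin 3 → ℝ :=
      ![![x * y, 1 - x * y, 0], ![1 - x * y, (x - 1) * y, y]]
    (∀ i g, 0 ≤ u i g) ∧ (∀ i, ∑ g, u i g = 1) ∧
    maxEgalWelfare u = x * y ∧
    egalWelfare u ![0, 1, 1] = x * y ∧
    (∀ B : Fin 3 → Fin 2, IsMNW u B →
      B = ![0, 0, 1] ∧ egalWelfare u B = y) := by
  intro u
  have hu : u = ![![x * y, 1 - x * y, 0], ![1 - x * y, (x - 1) * y, y]] := rfl
  -- arithmetic facts
  clear_value u
  have hx0 : (0:ℝ) < x := by linarith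
  set s := Real.sqrt x with hsdef
  have hs2 : s ^ 2 = x := Real.sq_sqrt hx0.le
  have hs0 : 0 < s := Real.sqrt_pos.mpr hx0
  have hs1 : 1 < s := by nlinarith
  have hxs : 0 < x + s := by linarith
  have h1 : 1 < y * (x + s) := by
    rw [div_lt_iff₀ hxs] at hy1; linarith
  have hy0 : 0 < y := by nlinarith
  have h2 : y * x ^ 2 < 1 := by
    rw [lt_div_iff₀ (by positivity)] at hy2; linarith
  have hxy1 : x * y < 1 := by nlinarith [mul_pos hy0 (mul_pos hx0 (sub_pos.mpr hx))]
  have hyxy : y < x * y := by nlinarith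
  have hhalf : 1 - x * y < x * y := by
    nlinarith [mul_pos hy0 (mul_pos hs0 (sub_pos.mpr hs1))]
  have hxs1 : y * (x - s) < 1 := by
    nlinarith [mul_pos hy0 hs0, mul_pos hy0 (mul_pos hx0 (sub_pos.mpr hx))]
  have hq : (1 - x * y) * (1 - (x - 1) * y) < y := by
    nlinarith [mul_pos (sub_pos.mpr h1) (sub_pos.mpr hxs1)]
  have hq2 : (1 - x * y) * (1 - x * y) < y := by nlinarith
  have hac : x * y * ((x - 1) * y) < y := by nlinarith
  have hsq : x * y * (x * y) < y := by nlinarith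
  have hylt1 : y < 1 := by nlinarith
  have hxy0 : 0 < x * y := by positivity
  have two : ∀ i : Fin 2, i = 0 ∨ i = 1 := by decide
  have hegal : ∀ f : Fin 3 → Fin 2, egalWelfare u f = min (util u f 0) (util u f 1) := by
    intro f
    apply le_antisymm
    · exact le_min (ciInf_le (Finite.bddBelow_range _) 0) (ciInf_le (Finite.bddBelow_range _) 1)
    · apply le_ciInf
      intro i
      rcases two i with h | h <;> subst h
      · exact min_le_left _ _
      · exact min_le_right _ _
  have hnash : ∀ f : Fin 3 → Fin 2, ∏ i, util u f i = util u f 0 * util u f 1 := by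
    intro f; rw [Fin.prod_univ_two]
  have hE011 : egalWelfare u ![0, 1, 1] = x * y := by
    have h0 : util u ![0, 1, 1] 0 = x * y := by simp [util3, hu]
    have h1 : util u ![0, 1, 1] 1 = (x - 1) * y + y := by simp [util3, hu]
    rw [hegal, h0, h1]
    have : (x - 1) * y + y = x * y := by ring
    rw [this, min_self]
  refine ⟨?_, ?_, ?_, hE011, ?_⟩
  · intro i g
    fin_cases i <;> fin_cases g <;> simp [hu] <;> nlinarith
  · intro i
    fin_cases i <;> simp [hu, Fin.sum_univ_three] <;> ring
  · -- maxEgalWelfare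
    have hle : ∀ f : Fin 3 → Fin 2, egalWelfare u f ≤ x * y := by
      intro f
      have e : f = ![f 0, f 1, f 2] := by funext g; fin_cases g <;> rfl
      rw [hegal]
      rcases two (f 0) with h0 | h0 <;> rcases two (f 1) with h1 | h1 <;>
        rcases two (f 2) with h2 | h2 <;> rw [h0, h1, h2] at e <;> rw [e]
      · refine le_trans (min_le_right _ _) ?_
        simp [util3, hu]; positivity
      · refine le_trans (min_le_right _ _) ?_
        simp [util3, hu]; linarith
      · refine le_trans (min_le_left _ _) ?_
        simp [util3, hu]
      · refine le_trans (min_le_left _ _) ?_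
        simp [util3, hu]
      · refine le_trans (min_le_left _ _) ?_
        simp [util3, hu]; linarith
      · refine le_trans (min_le_left _ _) ?_
        simp [util3, hu]; linarith
      · refine le_trans (min_le_left _ _) ?_
        simp [util3, hu]; linarith
      · refine le_trans (min_le_left _ _) ?_
        simp [util3, hu]; linarith
    apply le_antisymm (ciSup_le hle)
    rw [← hE011]
    exact le_ciSup (Finite.bddAbove_range _) _
  · intro B hB
    have key := hB ![0, 0, 1]
    rw [hnash, hnash] at key
    have k0 : util u ![0, 0, 1] 0 = x * y + (1 - x * y) := by simp [util3, hu]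
    have k1 : util u ![0, 0, 1] 1 = y := by simp [util3, hu]
    rw [k0, k1] at key
    have e : B = ![B 0, B 1, B 2] := by funext g; fin_cases g <;> rfl
    rcases two (B 0) with h0 | h0 <;> rcases two (B 1) with h1 | h1 <;>
      rcases two (B 2) with h2 | h2 <;> rw [h0, h1, h2] at e <;> rw [e] at key
    · exfalso; simp [util3, hu] at key; nlinarith
    · -- B = ![0,0,1] : the MNW allocation
      refine ⟨e, ?_⟩
      rw [e, hegal, k0, k1]
      have : x * y + (1 - x * y) = 1 := by ring
      rw [this, min_eq_right hylt1.le]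
    · exfalso; simp [util3, hu] at key; nlinarith
    · exfalso; simp [util3, hu] at key; nlinarith
    · exfalso; simp [util3, hu] at key; nlinarith
    · exfalso; simp [util3, hu] at key; nlinarith
    · exfalso; simp [util3, hu] at key; nlinarith
    · exfalso; simp [util3, hu] at key; nlinarith
end

section
/- For every fair-division instance with exactly 2 agents (with nonnegative, additive, normalized utilities) and every allocation A, there exists a Nash-welfare-maximizing allocation B with EW(A) ≤ 2·EW(B). Consequently, the egalitarian price of fairness of maximum Nash welfare over two-agent instances is at most 2. -/
open Finset

/-! ### Auxiliary lemmas -/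

lemma fin2_eq_or (i j k : Fin 2) (h : i ≠ j) : k = i ∨ k = j := by
  revert h; revert i j k; decide

lemma prod_two (F : Fin 2 → ℝ) (i j : Fin 2) (h : i ≠ j) :
    ∏ k, F k = F i * F j := by
  fin_cases i <;> fin_cases j <;> simp_all [Fin.prod_univ_two, mul_comm]

lemma util_add_compl {m : ℕ} (u : Fin 2 → Fin m → ℝ) (hnorm : ∀ i, ∑ g, u i g = 1)
    (f : Fin m → Fin 2) (i j : Fin 2) (h : i ≠ j) :
    util u f i + ∑ g ∈ bundle f j, u i g = 1 := by
  have hb : bundle f j = univ.filter (fun g => ¬ f g = i) := by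
    ext g
    simp only [bundle, mem_filter, mem_univ, true_and]
    rcases fin2_eq_or i j (f g) h with h1 | h1 <;> simp [h1, h, Ne.symm h]
  rw [util, bundle, hb, Finset.sum_filter_add_sum_filter_not]
  exact hnorm i

lemma util_update_i {m : ℕ} (u : Fin 2 → Fin m → ℝ) (f : Fin m → Fin 2)
    (g₀ : Fin m) (i j : Fin 2) (h : i ≠ j) (hg : f g₀ = j) :
    util u (Function.update f g₀ i) i = util u f i + u i g₀ := by
  have hnm : g₀ ∉ bundle f i := by simp [bundle, hg, h, Ne.symm h]
  have h1 : bundle (Function.update f g₀ i) i = insert g₀ (bundle f i) := by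
    ext g
    simp only [bundle, mem_filter, mem_univ, true_and, mem_insert, Function.update_apply]
    by_cases hgg : g = g₀ <;> simp [hgg]
  rw [util, h1, Finset.sum_insert hnm, util]; ring

lemma util_update_j {m : ℕ} (u : Fin 2 → Fin m → ℝ) (f : Fin m → Fin 2)
    (g₀ : Fin m) (i j : Fin 2) (h : i ≠ j) (hg : f g₀ = j) :
    util u (Function.update f g₀ i) j = util u f j - u j g₀ := by
  have hm : g₀ ∈ bundle f j := by simp [bundle, hg]
  have h1 : bundle (Function.update f g₀ i) j = (bundle f j).erase g₀ := by
    ext g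
    simp only [bundle, mem_filter, mem_univ, true_and, mem_erase, Function.update_apply]
    by_cases hgg : g = g₀ <;> simp [hgg, h, hg]
  rw [util, h1, Finset.sum_erase_eq_sub hm, util]

/-- Exchange inequality: moving one good of agent `j` to agent `i` cannot increase
the Nash product, for an MNW allocation. -/
lemma exchange {m : ℕ} (u : Fin 2 → Fin m → ℝ) (B : Fin m → Fin 2) (hB : IsMNW u B)
    (i j : Fin 2) (h : i ≠ j) (g₀ : Fin m) (hg : B g₀ = j) :
    (util u B i + u i g₀) * (util u B j - u j g₀) ≤ util u B i * util u B j := by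
  have hmnw := hB (Function.update B g₀ i)
  rw [prod_two _ i j h, prod_two _ i j h, util_update_i u B g₀ i j h hg,
    util_update_j u B g₀ i j h hg] at hmnw
  exact hmnw

lemma util_single_i {m : ℕ} (u : Fin 2 → Fin m → ℝ) (g₀ : Fin m) (i j : Fin 2) (h : i ≠ j) :
    util u (fun g => if g = g₀ then i else j) i = u i g₀ := by
  have h1 : bundle (fun g => if g = g₀ then i else j) i = {g₀} := by
    ext g
    simp only [bundle, mem_filter, mem_univ, true_and, mem_singleton]
    by_cases hgg : g = g₀ <;> simp [hgg, Ne.symm h]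
  rw [util, h1, Finset.sum_singleton]

lemma util_single_j {m : ℕ} (u : Fin 2 → Fin m → ℝ) (hnorm : ∀ i, ∑ g, u i g = 1)
    (g₀ : Fin m) (i j : Fin 2) (h : i ≠ j) :
    util u (fun g => if g = g₀ then i else j) j = 1 - u j g₀ := by
  have h1 : bundle (fun g => if g = g₀ then i else j) j = univ.erase g₀ := by
    ext g
    simp only [bundle, mem_filter, mem_univ, true_and, mem_erase]
    by_cases hgg : g = g₀ <;> simp [hgg, h]
  rw [util, h1, Finset.sum_erase_eq_sub (mem_univ g₀), hnorm j]

lemma util_nonneg {m : ℕ} (u : Fin 2 → Fin m → ℝ) (hpos : ∀ i g, 0 ≤ u i g)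
    (f : Fin m → Fin 2) (i : Fin 2) : 0 ≤ util u f i :=
  Finset.sum_nonneg fun g _ => hpos i g

lemma util_le_one {m : ℕ} (u : Fin 2 → Fin m → ℝ) (hpos : ∀ i g, 0 ≤ u i g)
    (hnorm : ∀ i, ∑ g, u i g = 1) (f : Fin m → Fin 2) (i : Fin 2) : util u f i ≤ 1 := by
  rw [← hnorm i]
  exact Finset.sum_le_sum_of_subset_of_nonneg (Finset.subset_univ _)
    (fun g _ _ => hpos i g)

lemma arith_final (μ bi : ℝ) (hμ0 : 0 ≤ μ) (hμ1 : μ ≤ 1) (hbi0 : 0 ≤ bi)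
    (h1 : (1 - μ) * μ ≤ bi) (h2 : μ * μ ≤ bi * (bi + (1 - μ))) : μ ≤ 2 * bi := by
  rcases le_or_gt μ (1/2) with hhalf | hhalf
  · nlinarith
  · nlinarith [sq_nonneg (2*bi - μ)]

/-- Key lemma: if `B` is MNW and agent `i` is the poorer agent under `B`,
then `i`'s utility is at least half of `min_k util(A,k)`. -/
lemma key {m : ℕ} (u : Fin 2 → Fin m → ℝ) (hpos : ∀ i g, 0 ≤ u i g)
    (hnorm : ∀ i, ∑ g, u i g = 1) (A B : Fin m → Fin 2) (hB : IsMNW u B)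
    (μ : ℝ) (hμ0 : 0 ≤ μ) (hμle : ∀ k, μ ≤ util u A k)
    (i j : Fin 2) (h : i ≠ j) (hij : util u B i ≤ util u B j) :
    μ ≤ 2 * util u B i := by
  set bi := util u B i with hbi_def
  set bj := util u B j with hbj_def
  have hbi0 : 0 ≤ bi := util_nonneg u hpos B i
  have hbj0 : 0 ≤ bj := util_nonneg u hpos B j
  have hbj1 : bj ≤ 1 := util_le_one u hpos hnorm B j
  have hμ1 : μ ≤ 1 := le_trans (hμle i) (util_le_one u hpos hnorm A i)
  have hNA : util u A i * util u A j ≤ bi * bj := by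
    have := hB A
    rwa [prod_two _ i j h, prod_two _ i j h] at this
  have hμμ : μ * μ ≤ util u A i * util u A j :=
    mul_le_mul (hμle i) (hμle j) hμ0 (le_trans hμ0 (hμle i))
  by_cases hN : 0 < bi * bj
  swap
  · -- Nash welfare is zero: μ must be 0
    push_neg at hN
    have h1 : μ * μ ≤ 0 := by linarith
    nlinarith
  · have hbi : 0 < bi := by
      rcases mul_pos_iff.mp hN with ⟨h1, _⟩ | ⟨h1, _⟩
      · exact h1
      · linarith
    have hbj : 0 < bj := by
      rcases mul_pos_iff.mp hN with ⟨_, h1⟩ | ⟨_, h1⟩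
      · exact h1
      · linarith
    -- goods in B's bundle of `j` with zero value to `j` have zero value to `i`
    have hzero : ∀ g ∈ bundle B j, u j g = 0 → u i g = 0 := by
      intro g hg hj0
      have hgB : B g = j := by simpa [bundle] using hg
      have hex := exchange u B hB i j h g hgB
      rw [hj0] at hex
      have : u i g * bj ≤ 0 := by nlinarith
      nlinarith [hpos i g]
    set S := (bundle B j).filter (fun g => 0 < u j g) with hS_def
    have hSne : S.Nonempty := by
      by_contra hne
      rw [Finset.not_nonempty_iff_eq_empty, Finset.filter_eq_empty_iff] at hne
      have : bj = 0 := Finset.sum_eq_zero (fun g hg =>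
        le_antisymm (by simpa using hne hg) (hpos j g))
      linarith
    obtain ⟨g₀, hg₀S, hmax⟩ := S.exists_max_image (fun g => u i g / u j g) hSne
    have hg₀B : B g₀ = j := by
      have := (Finset.mem_filter.mp hg₀S).1
      simpa [bundle] using this
    set L := u i g₀ with hL_def
    set M := u j g₀ with hM_def
    have hM : 0 < M := (Finset.mem_filter.mp hg₀S).2
    have hL0 : 0 ≤ L := hpos i g₀
    have hsum_j : ∑ g ∈ S, u j g = bj := by
      rw [hbj_def, util]
      refine Finset.sum_subset (Finset.filter_subset _ _) (fun g hg hns => ?_)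
      by_contra hne
      exact hns (Finset.mem_filter.mpr ⟨hg, lt_of_le_of_ne (hpos j g) (Ne.symm hne)⟩)
    have hsum_i : ∑ g ∈ S, u i g = ∑ g ∈ bundle B j, u i g := by
      refine Finset.sum_subset (Finset.filter_subset _ _) (fun g hg hns => ?_)
      refine hzero g hg ?_
      by_contra hne
      exact hns (Finset.mem_filter.mpr ⟨hg, lt_of_le_of_ne (hpos j g) (Ne.symm hne)⟩)
    -- cross-multiplied maximality of the ratio at g₀
    have hcross : ∀ g ∈ S, u i g * M ≤ L * u j g := by
      intro g hg
      have hjg : 0 < u j g := (Finset.mem_filter.mp hg).2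
      have := hmax g hg
      rwa [div_le_div_iff₀ hjg hM] at this
    have hstep5 : M * (∑ g ∈ bundle B j, u i g) ≤ L * bj := by
      rw [← hsum_i, ← hsum_j, Finset.mul_sum, Finset.mul_sum]
      refine Finset.sum_le_sum (fun g hg => ?_)
      have := hcross g hg
      linarith
    have hcompl : bi + ∑ g ∈ bundle B j, u i g = 1 := util_add_compl u hnorm B i j h
    have hex₀ := exchange u B hB i j h g₀ hg₀B
    have hLM : L * bj ≤ bi * M + L * M := by nlinarith
    have hEF1 : 1 ≤ 2 * bi + L := by nlinarith
    by_cases hL : L ≤ 1 - μ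
    · linarith
    · push_neg at hL
      -- the good g₀ belongs to A's bundle of agent i
      have hAg₀ : A g₀ = i := by
        rcases fin2_eq_or i j (A g₀) h with h1 | h1
        · exact h1
        · exfalso
          have hmem : g₀ ∈ bundle A j := by simp [bundle, h1]
          have hsingle : u i g₀ ≤ ∑ g ∈ bundle A j, u i g :=
            Finset.single_le_sum (fun g _ => hpos i g) hmem
          have hc := util_add_compl u hnorm A i j h
          have := hμle i
          linarith
      have hMle : M ≤ 1 - μ := by
        have hmem : g₀ ∈ bundle A i := by simp [bundle, hAg₀]
        have hsingle : u j g₀ ≤ ∑ g ∈ bundle A i, u j g :=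
          Finset.single_le_sum (fun g _ => hpos j g) hmem
        have hc := util_add_compl u hnorm A j i (Ne.symm h)
        have := hμle j
        linarith
      -- singleton allocation: give only g₀ to agent i
      have halone : L * (1 - M) ≤ bi * bj := by
        have hmnw := hB (fun g => if g = g₀ then i else j)
        rw [prod_two (fun k => util u (fun g => if g = g₀ then i else j) k) i j h,
          prod_two (fun k => util u B k) i j h] at hmnw
        rwa [util_single_i u g₀ i j h, util_single_j u hnorm g₀ i j h] at hmnw
      have hbi_lb : (1 - μ) * μ ≤ bi := by
        have h1 : (1 - μ) * μ ≤ L * (1 - M) :=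
          mul_le_mul hL.le (by linarith) hμ0 (by linarith)
        nlinarith [halone, h1, mul_le_mul_of_nonneg_left hbj1 hbi0]
      have hML : M < L := lt_of_le_of_lt hMle hL
      have hLpos : 0 < L := lt_of_le_of_lt (by linarith) hL
      have hbj_ub : bj ≤ bi + (1 - μ) := by
        have h2 : bj ≤ bi + M := by
          nlinarith [hLM, mul_le_mul_of_nonneg_left hML.le hbi0, hLpos]
        linarith
      have hquad : μ * μ ≤ bi * (bi + (1 - μ)) := by
        linarith [hμμ, hNA, mul_le_mul_of_nonneg_left hbj_ub hbi0]
      exact arith_final μ bi hμ0 hμ1 hbi0 hbi_lb hquad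

/-- For every two-agent instance (nonnegative, additive, normalized utilities)
and every allocation `A`, there is a Nash-welfare-maximizing allocation `B` with
`EW(A) ≤ 2 · EW(B)`; hence the egalitarian price of fairness of MNW over
two-agent instances is at most `2`. -/
theorem mnw_two_agent_egal_pof_upper (m : ℕ) (u : Fin 2 → Fin m → ℝ)
    (hpos : ∀ i g, 0 ≤ u i g) (hnorm : ∀ i, ∑ g, u i g = 1)
    (A : Fin m → Fin 2) :
    ∃ B : Fin m → Fin 2, IsMNW u B ∧
      egalWelfare u A ≤ 2 * egalWelfare u B := by
  obtain ⟨B, hBmax⟩ := Finite.exists_max (fun f : Fin m → Fin 2 => ∏ i, util u f i)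
  have hB : IsMNW u B := fun g => hBmax g
  refine ⟨B, hB, ?_⟩
  have hμle : ∀ k, egalWelfare u A ≤ util u A k := fun k =>
    ciInf_le (Set.finite_range _).bddBelow k
  have hμ0 : 0 ≤ egalWelfare u A :=
    le_ciInf (fun k => Finset.sum_nonneg fun g _ => hpos k g)
  have hkey : ∀ k : Fin 2, egalWelfare u A ≤ 2 * util u B k := by
    intro k
    have hne : k ≠ (if k = 0 then 1 else 0) := by
      fin_cases k <;> simp
    set k' := (if k = 0 then (1 : Fin 2) else 0) with hk'
    rcases le_total (util u B k) (util u B k') with hle | hle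
    · exact key u hpos hnorm A B hB _ hμ0 hμle k k' hne hle
    · have := key u hpos hnorm A B hB _ hμ0 hμle k' k (Ne.symm hne) hle
      linarith
  have h2 : egalWelfare u A / 2 ≤ egalWelfare u B :=
    le_ciInf (fun k => by linarith [hkey k])
  linarith
end

section
/- For every integer n ≥ 3 and every real M > 0, there exists a fair-division instance with n agents (with nonnegative, additive, normalized utilities) such that MEW > M·EW(B) for every allocation B that maximizes Nash welfare, and MEW > 0. Consequently, the egalitarian price of fairness of maximum Nash welfare is infinite for every n ≥ 3. -/
open Finset

/-! ### Auxiliary construction -/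

def agood (n : ℕ) (hn : 3 ≤ n) (i : Fin n) : Fin (n+1) :=
  if i.val = 0 then ⟨0, by omega⟩
  else if i.val = 1 then ⟨1, by omega⟩
  else if i.val = 2 then ⟨0, by omega⟩
  else ⟨i.val + 1, by omega⟩

def bgood (n : ℕ) (hn : 3 ≤ n) (i : Fin n) : Fin (n+1) :=
  if i.val = 0 then ⟨1, by omega⟩
  else if i.val = 1 then ⟨2, by omega⟩
  else if i.val = 2 then ⟨3, by omega⟩
  else ⟨0, by omega⟩

def vval (δ ε : ℝ) {n : ℕ} (i : Fin n) : ℝ :=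
  if i.val = 0 then 1 - δ
  else if i.val = 1 then 1 - δ
  else if i.val = 2 then 1 - ε
  else 1

def wval (δ ε : ℝ) {n : ℕ} (i : Fin n) : ℝ :=
  if i.val = 0 then δ
  else if i.val = 1 then δ
  else if i.val = 2 then ε
  else 0

def myu (n : ℕ) (hn : 3 ≤ n) (δ ε : ℝ) : Fin n → Fin (n+1) → ℝ := fun i g =>
  (if g = agood n hn i then vval δ ε i else 0) + (if g = bgood n hn i then wval δ ε i else 0)

def fstar (n : ℕ) (hn : 3 ≤ n) : Fin (n+1) → Fin n := fun g =>
  if g.val = 0 then ⟨2, by omega⟩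
  else if g.val = 1 then ⟨0, by omega⟩
  else if g.val = 2 then ⟨1, by omega⟩
  else if g.val = 3 then ⟨2, by omega⟩
  else ⟨g.val - 1, by omega⟩

def fref (n : ℕ) (hn : 3 ≤ n) : Fin (n+1) → Fin n := fun g =>
  if g.val = 0 then ⟨0, by omega⟩
  else if g.val = 1 then ⟨1, by omega⟩
  else if g.val = 2 then ⟨1, by omega⟩
  else if g.val = 3 then ⟨2, by omega⟩
  else ⟨g.val - 1, by omega⟩

lemma util_myu (n : ℕ) (hn : 3 ≤ n) (δ ε : ℝ) (f : Fin (n+1) → Fin n) (i : Fin n) :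
    util (myu n hn δ ε) f i =
      (if f (agood n hn i) = i then vval δ ε i else 0) +
      (if f (bgood n hn i) = i then wval δ ε i else 0) := by
  unfold util myu
  rw [Finset.sum_add_distrib]
  congr 1
  · rw [Finset.sum_ite_eq' (bundle f i) (agood n hn i) (fun _ => vval δ ε i)]
    simp [bundle]
  · rw [Finset.sum_ite_eq' (bundle f i) (bgood n hn i) (fun _ => wval δ ε i)]
    simp [bundle]

section eval

variable {n : ℕ}

lemma agood_hi (hn : 3 ≤ n) (i : Fin n) (h : 3 ≤ i.val) :
    agood n hn i = ⟨i.val + 1, by omega⟩ := by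
  unfold agood
  split_ifs <;> first | rfl | omega

lemma bgood_hi (hn : 3 ≤ n) (i : Fin n) (h : 3 ≤ i.val) :
    bgood n hn i = ⟨0, by omega⟩ := by
  unfold bgood
  split_ifs <;> first | rfl | omega

lemma vval_hi (δ ε : ℝ) (i : Fin n) (h : 3 ≤ i.val) : vval δ ε i = 1 := by
  unfold vval
  split_ifs <;> first | rfl | omega

lemma wval_hi (δ ε : ℝ) (i : Fin n) (h : 3 ≤ i.val) : wval δ ε i = 0 := by
  unfold wval
  split_ifs <;> first | rfl | omega

lemma fstar_hi (hn : 3 ≤ n) (k : ℕ) (h4 : 4 ≤ k) (hk : k < n + 1) :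
    fstar n hn ⟨k, hk⟩ = ⟨k - 1, by omega⟩ := by
  unfold fstar
  split_ifs <;> first | rfl | (simp only [Fin.val_mk] at *; omega)

lemma fref_hi (hn : 3 ≤ n) (k : ℕ) (h4 : 4 ≤ k) (hk : k < n + 1) :
    fref n hn ⟨k, hk⟩ = ⟨k - 1, by omega⟩ := by
  unfold fref
  split_ifs <;> first | rfl | (simp only [Fin.val_mk] at *; omega)

/-- utilities under the egalitarian allocation `fstar` -/
lemma util_fstar (hn : 3 ≤ n) (δ ε : ℝ) (i : Fin n) :
    util (myu n hn δ ε) (fstar n hn) i =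
      (if i.val = 0 then δ else if i.val = 1 then δ
        else if i.val = 2 then (1 - ε) + ε else 1) := by
  rw [util_myu]
  rcases i with ⟨iv, hiv⟩
  rcases (show iv = 0 ∨ iv = 1 ∨ iv = 2 ∨ 3 ≤ iv by omega) with h | h | h | h
  · subst h; simp [agood, bgood, fstar, vval, wval, Fin.ext_iff]
  · subst h; simp [agood, bgood, fstar, vval, wval, Fin.ext_iff]
  · subst h; simp [agood, bgood, fstar, vval, wval, Fin.ext_iff]
  · have ha : fstar n hn (agood n hn ⟨iv, hiv⟩) = ⟨iv, hiv⟩ := by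
      rw [agood_hi hn _ h, fstar_hi hn (iv + 1) (by omega) (by omega)]
      simp only [Fin.mk.injEq]
      omega
    have hb : fstar n hn (bgood n hn ⟨iv, hiv⟩) = (⟨2, by omega⟩ : Fin n) := by
      rw [bgood_hi hn _ h]; rfl
    rw [ha, hb]
    have hb' : (⟨2, by omega⟩ : Fin n) ≠ ⟨iv, hiv⟩ := by
      intro hcon
      have hv := congrArg Fin.val hcon
      simp only [Fin.val_mk] at hv
      omega
    rw [if_pos rfl, if_neg hb', vval_hi δ ε _ h]
    split_ifs with h1 h2 h3
    · exfalso; simp only [Fin.val_mk] at h1; omega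
    · exfalso; simp only [Fin.val_mk] at h2; omega
    · exfalso; simp only [Fin.val_mk] at h3; omega
    · norm_num

/-- utilities under the reference allocation `fref` -/
lemma util_fref (hn : 3 ≤ n) (δ ε : ℝ) (i : Fin n) :
    util (myu n hn δ ε) (fref n hn) i =
      (if i.val = 0 then 1 - δ else if i.val = 2 then ε else 1) := by
  rw [util_myu]
  rcases i with ⟨iv, hiv⟩
  rcases (show iv = 0 ∨ iv = 1 ∨ iv = 2 ∨ 3 ≤ iv by omega) with h | h | h | h
  · subst h; simp [agood, bgood, fref, vval, wval, Fin.ext_iff]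
  · subst h
    simp [agood, bgood, fref, vval, wval, Fin.ext_iff]
  · subst h; simp [agood, bgood, fref, vval, wval, Fin.ext_iff]
  · have ha : fref n hn (agood n hn ⟨iv, hiv⟩) = ⟨iv, hiv⟩ := by
      rw [agood_hi hn _ h, fref_hi hn (iv + 1) (by omega) (by omega)]
      simp only [Fin.mk.injEq]
      omega
    have hb : fref n hn (bgood n hn ⟨iv, hiv⟩) = (⟨0, by omega⟩ : Fin n) := by
      rw [bgood_hi hn _ h]; rfl
    rw [ha, hb]
    have hb' : (⟨0, by omega⟩ : Fin n) ≠ ⟨iv, hiv⟩ := by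
      intro hcon
      have hv := congrArg Fin.val hcon
      simp only [Fin.val_mk] at hv
      omega
    rw [if_pos rfl, if_neg hb', vval_hi δ ε _ h]
    split_ifs with h1 h2
    · exfalso; simp only [Fin.val_mk] at h1; omega
    · exfalso; simp only [Fin.val_mk] at h2; omega
    · norm_num

end eval

set_option maxHeartbeats 2000000 in
/-- For every `n ≥ 3` and `M > 0` there is an instance with `n` agents
(nonnegative, additive, normalized utilities) with `MEW > 0` and
`MEW > M · EW(B)` for every Nash-welfare-maximizing allocation `B`; hence the
egalitarian price of fairness of MNW is infinite for every `n ≥ 3`. -/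
theorem mnw_egal_pof_infinite (n : ℕ) (hn : 3 ≤ n) (M : ℝ) (hM : 0 < M) :
    ∃ (m : ℕ) (u : Fin n → Fin m → ℝ),
      (∀ i g, 0 ≤ u i g) ∧ (∀ i, ∑ g, u i g = 1) ∧
      0 < maxEgalWelfare u ∧
      ∀ B : Fin m → Fin n, IsMNW u B →
        M * egalWelfare u B < maxEgalWelfare u := by
  have hM1 : (0:ℝ) < M + 1 := by linarith
  haveI : Nonempty (Fin n) := ⟨⟨0, by omega⟩⟩
  set δ : ℝ := 1 / (4 * (M + 1)) with hδdef
  have hδ0 : 0 < δ := by positivity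
  have hδeq : δ * (4 * (M + 1)) = 1 := by
    rw [hδdef]; field_simp
  have hδ4 : δ < 1 / 4 := by nlinarith
  set ε : ℝ := 2 * δ ^ 2 with hεdef
  have hε0 : 0 < ε := by positivity
  have hε1 : ε < 1 := by nlinarith
  set u := myu n hn δ ε with hu
  have hV0 : ∀ i : Fin n, 0 ≤ vval δ ε i := by
    intro i; unfold vval; split_ifs <;> linarith
  have hW0 : ∀ i : Fin n, 0 ≤ wval δ ε i := by
    intro i; unfold wval; split_ifs <;> linarith
  have hVW : ∀ i : Fin n, vval δ ε i + wval δ ε i = 1 := by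
    intro i; unfold vval wval; split_ifs <;> ring
  have hu_nonneg : ∀ i g, 0 ≤ u i g := by
    intro i g
    have h1 := hV0 i; have h2 := hW0 i
    rw [hu]; unfold myu
    have e1 : (0:ℝ) ≤ (if g = agood n hn i then vval δ ε i else 0) := by
      split_ifs <;> linarith
    have e2 : (0:ℝ) ≤ (if g = bgood n hn i then wval δ ε i else 0) := by
      split_ifs <;> linarith
    linarith
  have hutil_nonneg : ∀ (f : Fin (n+1) → Fin n) i, 0 ≤ util u f i := by
    intro f i
    rw [hu, util_myu]
    have h1 := hV0 i; have h2 := hW0 i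
    have e1 : (0:ℝ) ≤ (if f (agood n hn i) = i then vval δ ε i else 0) := by
      split_ifs <;> linarith
    have e2 : (0:ℝ) ≤ (if f (bgood n hn i) = i then wval δ ε i else 0) := by
      split_ifs <;> linarith
    linarith
  have hutil_le_one : ∀ (f : Fin (n+1) → Fin n) i, util u f i ≤ 1 := by
    intro f i
    rw [hu, util_myu]
    have h1 := hV0 i; have h2 := hW0 i; have h3 := hVW i
    have e1 : (if f (agood n hn i) = i then vval δ ε i else 0) ≤ vval δ ε i := by
      split_ifs <;> linarith
    have e2 : (if f (bgood n hn i) = i then wval δ ε i else 0) ≤ wval δ ε i := by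
      split_ifs <;> linarith
    linarith
  have hsum : ∀ i : Fin n, ∑ g, u i g = 1 := by
    intro i
    rw [hu]; unfold myu
    rw [Finset.sum_add_distrib]
    rw [Finset.sum_ite_eq' Finset.univ (agood n hn i) (fun _ => vval δ ε i)]
    rw [Finset.sum_ite_eq' Finset.univ (bgood n hn i) (fun _ => wval δ ε i)]
    simp [hVW i]
  -- MEW ≥ δ
  have hMEW : δ ≤ maxEgalWelfare u := by
    have hegal : δ ≤ egalWelfare u (fstar n hn) := by
      apply le_ciInf
      intro i
      rw [hu, util_fstar hn δ ε i]
      split_ifs <;> linarith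
    exact le_ciSup_of_le (Set.Finite.bddAbove (Set.finite_range _)) (fstar n hn) hegal
  refine ⟨n + 1, u, hu_nonneg, hsum, lt_of_lt_of_le hδ0 hMEW, ?_⟩
  intro Bf hBf
  -- product splitting helper
  have prod_split : ∀ (a b : Fin n) (h : Fin n → ℝ), a ≠ b →
      (∀ i, i ≠ a → i ≠ b → h i = 1) → ∏ i, h i = h a * h b := by
    intro a b h hab h1
    rw [← Finset.prod_sdiff (Finset.subset_univ ({a, b} : Finset (Fin n))),
      Finset.prod_pair hab]
    have e : ∏ i ∈ Finset.univ \ ({a, b} : Finset (Fin n)), h i = 1 := by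
      apply Finset.prod_eq_one
      intro i hi
      rw [Finset.mem_sdiff, Finset.mem_insert, Finset.mem_singleton] at hi
      push_neg at hi
      exact h1 i hi.2.1 hi.2.2
    rw [e, one_mul]
  have hpab : (⟨0, by omega⟩ : Fin n) ≠ (⟨1, by omega⟩ : Fin n) := by
    simp [Fin.ext_iff]
  have hpac : (⟨0, by omega⟩ : Fin n) ≠ (⟨2, by omega⟩ : Fin n) := by
    simp [Fin.ext_iff]
  have hrefprod : ∏ i, util u (fref n hn) i = (1 - δ) * ε := by
    have e : ∏ i, util u (fref n hn) i =
        util u (fref n hn) ⟨0, by omega⟩ * util u (fref n hn) ⟨2, by omega⟩ := by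
      apply prod_split _ _ _ hpac
      intro i hia hib
      rw [hu, util_fref hn δ ε i]
      have h0 : i.val ≠ 0 := fun h => hia (Fin.ext h)
      have h2 : i.val ≠ 2 := fun h => hib (Fin.ext h)
      simp [h0, h2]
    rw [e, hu, util_fref hn δ ε, util_fref hn δ ε]
    norm_num
  -- key step: good 0 does not go to agent 2 in any MNW allocation
  have hkey : Bf ⟨0, by omega⟩ ≠ (⟨2, by omega⟩ : Fin n) := by
    intro hq0
    have hlow : (1 - δ) * ε ≤ ∏ i, util u Bf i := hrefprod ▸ hBf (fref n hn)
    have hup : ∏ i, util u Bf i ≤ δ * δ := by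
      by_cases hq1 : Bf ⟨1, by omega⟩ = (⟨0, by omega⟩ : Fin n)
      · have hb : ∏ i : Fin n, (if i.val = 0 then δ else if i.val = 1 then δ else 1 : ℝ) = δ * δ := by
          have e := prod_split ⟨0, by omega⟩ ⟨1, by omega⟩
            (fun (i : Fin n) => (if i.val = 0 then δ else if i.val = 1 then δ else 1 : ℝ)) hpab
            (by
              intro i hia hib
              have h0 : i.val ≠ 0 := fun h => hia (Fin.ext h)
              have h1 : i.val ≠ 1 := fun h => hib (Fin.ext h)
              simp [h0, h1])
          rw [e]; norm_num
        rw [← hb]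
        apply Finset.prod_le_prod
        · intro i _; exact hutil_nonneg Bf i
        · intro i _
          rcases i with ⟨iv, hiv⟩
          rcases (show iv = 0 ∨ iv = 1 ∨ 2 ≤ iv by omega) with h | h | h
          · subst h
            have hrhs : (if (⟨0, hiv⟩ : Fin n).val = 0 then δ
                else if (⟨0, hiv⟩ : Fin n).val = 1 then δ else 1) = δ := by
              simp
            rw [hrhs, hu, util_myu]
            have ha : agood n hn ⟨0, hiv⟩ = ⟨0, by omega⟩ := rfl
            rw [ha, hq0]
            have hne : (⟨2, by omega⟩ : Fin n) ≠ ⟨0, hiv⟩ := by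
              simp [Fin.ext_iff]
            rw [if_neg hne]
            have hw : wval δ ε (⟨0, hiv⟩ : Fin n) = δ := rfl
            have e2 : (if Bf (bgood n hn ⟨0, hiv⟩) = ⟨0, hiv⟩
                then wval δ ε (⟨0, hiv⟩ : Fin n) else 0) ≤ δ := by
              split_ifs
              · rw [hw]
              · exact hδ0.le
            linarith
          · subst h
            have hrhs : (if (⟨1, hiv⟩ : Fin n).val = 0 then δ
                else if (⟨1, hiv⟩ : Fin n).val = 1 then δ else 1) = δ := by
              simp
            rw [hrhs, hu, util_myu]
            have ha : agood n hn ⟨1, hiv⟩ = ⟨1, by omega⟩ := rfl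
            rw [ha, hq1]
            have hne : (⟨0, by omega⟩ : Fin n) ≠ ⟨1, hiv⟩ := by
              simp [Fin.ext_iff]
            rw [if_neg hne]
            have hw : wval δ ε (⟨1, hiv⟩ : Fin n) = δ := rfl
            have e2 : (if Bf (bgood n hn ⟨1, hiv⟩) = ⟨1, hiv⟩
                then wval δ ε (⟨1, hiv⟩ : Fin n) else 0) ≤ δ := by
              split_ifs
              · rw [hw]
              · exact hδ0.le
            linarith
          · have h0 : (⟨iv, hiv⟩ : Fin n).val ≠ 0 := by simp; omega
            have h1 : (⟨iv, hiv⟩ : Fin n).val ≠ 1 := by simp; omega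
            rw [if_neg h0, if_neg h1]
            exact hutil_le_one Bf _
      · have hz : util u Bf ⟨0, by omega⟩ = 0 := by
          rw [hu, util_myu]
          have ha : agood n hn ⟨0, by omega⟩ = ⟨0, by omega⟩ := rfl
          have hb : bgood n hn ⟨0, by omega⟩ = ⟨1, by omega⟩ := rfl
          rw [ha, hb, hq0, if_neg (Ne.symm hpac), if_neg hq1]
          norm_num
        have hzero : ∏ i, util u Bf i = 0 :=
          Finset.prod_eq_zero (Finset.mem_univ (⟨0, by omega⟩ : Fin n)) hz
        rw [hzero]; positivity
    have hcontra : (1 - δ) * ε ≤ δ * δ := le_trans hlow hup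
    rw [hεdef] at hcontra
    nlinarith [hcontra, hδ0, hδ4]
  -- agent 2's utility under Bf is at most ε
  have hB2 : util u Bf ⟨2, by omega⟩ ≤ ε := by
    rw [hu, util_myu]
    have ha : agood n hn ⟨2, by omega⟩ = ⟨0, by omega⟩ := rfl
    rw [ha, if_neg hkey]
    have hw : wval δ ε (⟨2, by omega⟩ : Fin n) = ε := rfl
    have e2 : (if Bf (bgood n hn ⟨2, by omega⟩) = ⟨2, by omega⟩
        then wval δ ε (⟨2, by omega⟩ : Fin n) else 0) ≤ ε := by
      split_ifs
      · rw [hw]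
      · exact hε0.le
    linarith
  have hegal_le : egalWelfare u Bf ≤ ε :=
    le_trans (ciInf_le (Set.Finite.bddBelow (Set.finite_range _)) (⟨2, by omega⟩ : Fin n)) hB2
  have hlt : M * egalWelfare u Bf < δ := by
    have h1 : M * egalWelfare u Bf ≤ M * ε :=
      mul_le_mul_of_nonneg_left hegal_le (le_of_lt hM)
    have h2 : M * ε < δ := by nlinarith
    linarith
  exact lt_of_lt_of_le hlt hMEW
end
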